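/- arXiv:1210.0664 — 11 statements merged into one kernel-verified Lean document; each statement's English description precedes it below -/
import Mathlib

section
/- Let n ≥ 1 be an integer and let h : {0,1,…,n} → ℝ satisfy h(0) = 0, h(n) = 1, and, for every integer k with 1 ≤ k ≤ n−1, (3·(k/n)·(1−k/n)² + 3·(1−k/n)·(k/n)²)·h(k) = 3·(1−k/n)·(k/n)²·h(k+1) + 3·(k/n)·(1−k/n)²·h(k−1). Then for every integer R₀ with 0 ≤ R₀ ≤ n, h(R₀) = (1/2)^(n−1) · ∑_{j=1}^{R₀} C(n−1, j−1), where C(a,b) denotes the binomial coefficient. -/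
/-!
Dividing the recurrence by `3p(1 - p)`, where `p = k/n`, leaves `h k = p h(k+1) + (1 - p) h(k-1)`,
i.e. `k Δₖ = (n - k) Δₖ₋₁` for the increments `Δₖ = h(k+1) - h k`. This is the ratio recurrence
of the binomial coefficients, so `Δₖ = h 1 · C(n-1, k)`. Summing, `h k = h 1 · ∑_{i<k} C(n-1, i)`,
and `h n = 1` forces `h 1 = 2^{-(n-1)}`.
-/

open Finset

section

variable {K : Type*} [Field K] [CharZero K]

theorem mul_sub_eq_of_harmonic {p x y z : K} (hp₀ : p ≠ 0) (hp₁ : p ≠ 1)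
    (h : (3 * p * (1 - p) ^ 2 + 3 * (1 - p) * p ^ 2) * x
      = 3 * (1 - p) * p ^ 2 * y + 3 * p * (1 - p) ^ 2 * z) :
    p * (y - x) = (1 - p) * (x - z) := by
  apply mul_left_cancel₀ (mul_ne_zero (mul_ne_zero three_ne_zero hp₀) (sub_ne_zero.mpr hp₁.symm))
  linear_combination -h

theorem succ_mul_sub_eq_of_harmonic {n j : ℕ} (hj : j + 1 < n) {x y z : K}
    (h : (3 * (((j + 1 : ℕ) : K) / n) * (1 - ((j + 1 : ℕ) : K) / n) ^ 2
        + 3 * (1 - ((j + 1 : ℕ) : K) / n) * (((j + 1 : ℕ) : K) / n) ^ 2) * x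
      = 3 * (1 - ((j + 1 : ℕ) : K) / n) * (((j + 1 : ℕ) : K) / n) ^ 2 * y
        + 3 * (((j + 1 : ℕ) : K) / n) * (1 - ((j + 1 : ℕ) : K) / n) ^ 2 * z) :
    ((j : K) + 1) * (y - x) = (((n - 1 : ℕ) : K) - j) * (x - z) := by
  have hn : (n : K) ≠ 0 := by exact_mod_cast (by omega : n ≠ 0)
  have hjn : ((j + 1 : ℕ) : K) ≠ n := by exact_mod_cast hj.ne
  have := mul_sub_eq_of_harmonic (div_ne_zero (Nat.cast_ne_zero.mpr j.succ_ne_zero) hn)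
    (by rwa [ne_eq, div_eq_one_iff_eq hn]) h
  rw [Nat.cast_pred (by omega)]
  field_simp at this
  push_cast at this
  linear_combination this

theorem eq_mul_choose_of_succ_mul_eq {d : ℕ → K} {m : ℕ}
    (hd : ∀ j < m, ((j : K) + 1) * d (j + 1) = ((m : K) - j) * d j) :
    ∀ j ≤ m, d j = d 0 * m.choose j := by
  intro j
  induction j with
  | zero => simp
  | succ j ih =>
    intro hj
    have hchoose : (m.choose (j + 1) : K) * (j + 1) = m.choose j * ((m : K) - j) := by
      rw [← Nat.cast_sub (by omega : j ≤ m)]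
      exact_mod_cast Nat.choose_succ_right_eq m j
    apply mul_left_cancel₀ (Nat.cast_add_one_ne_zero j)
    linear_combination hd j hj + ((m : K) - j) * ih (by omega) - d 0 * hchoose

theorem eq_mul_sum_range_choose_of_succ_mul_sub_eq {h : ℕ → K} {m : ℕ} (h0 : h 0 = 0)
    (hd : ∀ j < m,
      ((j : K) + 1) * (h (j + 1 + 1) - h (j + 1)) = ((m : K) - j) * (h (j + 1) - h j)) :
    ∀ k ≤ m + 1, h k = h 1 * ∑ i ∈ range k, (m.choose i : K) := by
  intro k hk
  rw [← sub_zero (h k), ← h0, ← sum_range_sub, mul_sum]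
  refine sum_congr rfl fun i hi => ?_
  simpa [h0, mul_comm] using
    eq_mul_choose_of_succ_mul_eq (d := fun j => h (j + 1) - h j) hd i
      (by rw [mem_range] at hi; omega)

end

theorem sum_Icc_one_pred_eq_sum_range {M : Type*} [AddCommMonoid M] (f : ℕ → M) (R : ℕ) :
    ∑ j ∈ Icc 1 R, f (j - 1) = ∑ i ∈ range R, f i := by
  rw [← Ico_add_one_right_eq_Icc, sum_Ico_eq_sum_range]
  simp

theorem urn_absorption_probability
    (n : ℕ) (hn : 1 ≤ n) (h : ℕ → ℝ)
    (h0 : h 0 = 0) (hN : h n = 1)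
    (hrec : ∀ k : ℕ, 1 ≤ k → k ≤ n - 1 →
      (3 * ((k : ℝ) / n) * (1 - (k : ℝ) / n) ^ 2
        + 3 * (1 - (k : ℝ) / n) * ((k : ℝ) / n) ^ 2) * h k
      = 3 * (1 - (k : ℝ) / n) * ((k : ℝ) / n) ^ 2 * h (k + 1)
        + 3 * ((k : ℝ) / n) * (1 - (k : ℝ) / n) ^ 2 * h (k - 1)) :
    ∀ R0 : ℕ, R0 ≤ n →
      h R0 = (1 / 2 : ℝ) ^ (n - 1) *
        ∑ j ∈ Finset.Icc 1 R0, ((n - 1).choose (j - 1) : ℝ) := by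
  have hsum := eq_mul_sum_range_choose_of_succ_mul_sub_eq h0 fun j hj =>
    succ_mul_sub_eq_of_harmonic (by omega) (hrec (j + 1) (by omega) (by omega))
  have h1 : h 1 = (1 / 2 : ℝ) ^ (n - 1) := by
    have htotal : ∑ i ∈ range n, ((n - 1).choose i : ℝ) = 2 ^ (n - 1) := by
      exact_mod_cast Nat.sub_add_cancel hn ▸ Nat.sum_range_choose (n - 1)
    have := hsum n (by omega)
    rw [hN, htotal] at this
    rw [one_div_pow, eq_div_iff (by positivity)]
    exact this.symm
  intro R0 hR0
  rw [hsum R0 (by omega), h1, sum_Icc_one_pred_eq_sum_range fun i => ((n - 1).choose i : ℝ)]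
end

section
/- Let p : ℕ × ℕ × ℕ → ℝ satisfy: p(a, a, i) = 1 if i = a and p(a, a, i) = 0 if i ≠ a; and, for all a < b and all i, p(a, b, i) = (1/2)·p(a+1, b, i) + (1/2)·p(a, b−1, i). Then for all integers a ≤ i ≤ b, p(a, b, i) = (1/2)^(b−a) · C(b−a, i−a), where C(m,j) denotes the binomial coefficient. -/
theorem removeRandomExtreme_winner_distribution
    (p : ℕ × ℕ × ℕ → ℝ)
    (hbase : ∀ a i : ℕ, (i = a → p (a, a, i) = 1) ∧ (i ≠ a → p (a, a, i) = 0))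
    (hrec : ∀ a b i : ℕ, a < b →
      p (a, b, i) = (1 / 2) * p (a + 1, b, i) + (1 / 2) * p (a, b - 1, i)) :
    ∀ a i b : ℕ, a ≤ i → i ≤ b →
      p (a, b, i) = (1 / 2 : ℝ) ^ (b - a) * ((b - a).choose (i - a) : ℝ) := by
  have hzero : ∀ n a b i : ℕ, b = a + n → (i < a ∨ b < i) → p (a, b, i) = 0 := by
    intro n
    induction n with
    | zero =>
      intro a b i hb hi
      have hba : b = a := by omega
      rw [hba]
      exact (hbase a i).2 (by omega)
    | succ m ih =>
      intro a b i hb hi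
      have hab : a < b := by omega
      rw [hrec a b i hab, ih (a+1) b i (by omega) (by omega),
        ih a (b-1) i (by omega) (by omega)]
      ring
  have main : ∀ n a b i : ℕ, b = a + n → a ≤ i → i ≤ b →
      p (a, b, i) = (1 / 2 : ℝ) ^ (b - a) * ((b - a).choose (i - a) : ℝ) := by
    intro n
    induction n with
    | zero =>
      intro a b i hb h1 h2
      have hi : i = a := by omega
      have hba : b = a := by omega
      rw [hi, hba]
      simp [(hbase a a).1 rfl]
    | succ m ih =>
      intro a b i hb h1 h2
      have hab : a < b := by omega
      rw [hrec a b i hab]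
      rcases eq_or_lt_of_le h1 with h | h
      · rw [hzero m (a+1) b i (by omega) (by omega),
          ih a (b-1) i (by omega) (by omega) (by omega)]
        have e1 : b - a = m + 1 := by omega
        have e2 : b - 1 - a = m := by omega
        have e3 : i - a = 0 := by omega
        rw [e1, e2, e3]
        simp [pow_succ]
        ring
      · rcases eq_or_lt_of_le h2 with h2' | h2'
        · rw [hzero m a (b-1) i (by omega) (by omega),
            ih (a+1) b i (by omega) (by omega) (by omega)]
          have e1 : b - a = m + 1 := by omega
          have e2 : b - (a+1) = m := by omega
          have e3 : i - a = m + 1 := by omega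
          have e4 : i - (a+1) = m := by omega
          rw [e1, e2, e3, e4]
          simp [pow_succ]
          ring
        · rw [ih (a+1) b i (by omega) (by omega) (by omega),
            ih a (b-1) i (by omega) (by omega) (by omega)]
          have e1 : b - (a+1) = m := by omega
          have e2 : b - 1 - a = m := by omega
          have e3 : b - a = m + 1 := by omega
          obtain ⟨k, hk⟩ : ∃ k, i - a = k + 1 := ⟨i - a - 1, by omega⟩
          have e4 : i - (a+1) = k := by omega
          rw [e1, e2, e3, e4, hk, Nat.choose_succ_succ]
          push_cast
          ring
  intro a i b h1 h2
  exact main (b - a) a b i (by omega) h1 h2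
end

section
/- Let n ≥ 1 be an integer and let h : {0,1,…,n} → ℝ satisfy h(0) = 0, h(n) = 1, and h(r) = (r/n)·h(r+1) + ((n−r)/n)·h(r−1) for every integer r with 1 ≤ r ≤ n−1. Then for every integer r with 0 ≤ r ≤ n, h(r) = (1/2)^(n−1) · ∑_{j=1}^{r} C(n−1, j−1), where C(a,b) denotes the binomial coefficient. -/
/-!
Multiplying the recurrence by `n` and writing `n = r + (n - r)` turns it into
`r (h(r+1) - h r) = (n - r) (h r - h(r-1))`, which is exactly the ratio recurrence of the
binomial coefficients `C(n-1, r)`. Hence the increments of `h` are `h 1 · C(n-1, r)`, so `h r` is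
`h 1` times a partial row sum of Pascal's triangle, and `h n = 1` together with
`∑ₖ C(n-1, k) = 2^(n-1)` forces `h 1 = (1/2)^(n-1)`.
-/

open Finset

theorem eq_mul_choose_of_succ_mul_eq_s5 (m : ℕ) (e : ℕ → ℝ)
    (he : ∀ k < m, ((k : ℝ) + 1) * e (k + 1) = ((m : ℝ) - k) * e k) :
    ∀ k ≤ m, e k = e 0 * m.choose k := by
  intro k
  induction k with
  | zero => simp
  | succ k ih =>
    intro hk
    have hchoose : (m.choose (k + 1) : ℝ) * (k + 1) = m.choose k * ((m : ℝ) - k) := by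
      rw [← Nat.cast_sub (by omega)]
      exact_mod_cast Nat.choose_succ_right_eq m k
    have hk1 : ((k : ℝ) + 1) ≠ 0 := by positivity
    refine mul_left_cancel₀ hk1 ?_
    rw [he k (by omega), ih (by omega)]
    linear_combination (-e 0) * hchoose

theorem sum_Icc_one_comp_pred {M : Type*} [AddCommMonoid M] (f : ℕ → M) (r : ℕ) :
    ∑ j ∈ Icc 1 r, f (j - 1) = ∑ k ∈ range r, f k := by
  induction r with
  | zero => simp
  | succ r ih => rw [sum_Icc_succ_top (by omega), ih, sum_range_succ, Nat.add_sub_cancel]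

theorem contractExtremes_winner_distribution
    (n : ℕ) (hn : 1 ≤ n) (h : ℕ → ℝ)
    (h0 : h 0 = 0) (hN : h n = 1)
    (hrec : ∀ r : ℕ, 1 ≤ r → r ≤ n - 1 →
      h r = ((r : ℝ) / n) * h (r + 1) + (((n : ℝ) - r) / n) * h (r - 1)) :
    ∀ r : ℕ, r ≤ n →
      h r = (1 / 2 : ℝ) ^ (n - 1) *
        ∑ j ∈ Finset.Icc 1 r, ((n - 1).choose (j - 1) : ℝ) := by
  set e : ℕ → ℝ := fun k => h (k + 1) - h k
  have hincr : ∀ k ≤ n - 1, e k = e 0 * (n - 1).choose k := by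
    refine eq_mul_choose_of_succ_mul_eq_s5 (n - 1) e fun k hk => ?_
    have hrec' := hrec (k + 1) (by omega) (by omega)
    rw [Nat.add_sub_cancel] at hrec'
    have hnR : (n : ℝ) ≠ 0 := by positivity
    field_simp at hrec'
    rw [Nat.cast_pred (by omega)]
    push_cast at hrec' ⊢
    linear_combination -hrec'
  have hpartial : ∀ r ≤ n, h r = e 0 * ∑ k ∈ range r, ((n - 1).choose k : ℝ) := by
    intro r hr
    rw [mul_sum, ← sub_zero (h r), ← h0, ← sum_range_sub h r]
    exact sum_congr rfl fun k hk => hincr k (by simp at hk; omega)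
  have he0 : e 0 = (1 / 2 : ℝ) ^ (n - 1) := by
    have hrow : ∑ k ∈ range n, ((n - 1).choose k : ℝ) = 2 ^ (n - 1) := by
      rw [← Nat.sub_add_cancel hn]
      exact_mod_cast Nat.sum_range_choose (n - 1)
    have := hpartial n le_rfl
    rw [hN, hrow] at this
    rw [one_div_pow, eq_div_iff (by positivity)]
    linarith
  intro r hr
  rw [hpartial r hr, he0, sum_Icc_one_comp_pred (fun k => ((n - 1).choose k : ℝ))]
end

section
/- For every real number x with 0 ≤ x ≤ 1: 2·( ∫_0^x (1 − (x+y)/2) dy + ∫_x^1 (x+y)/2 dy ) = 3x(1−x) + 1/2, and moreover 3x(1−x) + 1/2 = (1/2)·(6x(1−x)) + (1/2)·1. -/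
theorem hotOrNot_density (x : ℝ) (hx0 : 0 ≤ x) (hx1 : x ≤ 1) :
    2 * ((∫ y in (0 : ℝ)..x, (1 - (x + y) / 2)) + ∫ y in x..(1 : ℝ), (x + y) / 2)
      = 3 * x * (1 - x) + 1 / 2 ∧
    3 * x * (1 - x) + 1 / 2 = (1 / 2) * (6 * x * (1 - x)) + (1 / 2) * 1 := by
  have hI : ∀ a b : ℝ, IntervalIntegrable (fun y => y / 2) MeasureTheory.volume a b :=
    fun a b => (continuous_id.div_const 2).intervalIntegrable a b
  constructor
  · have h1 : (∫ y in (0 : ℝ)..x, (1 - (x + y) / 2))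
        = x - (x / 2 * x + (x ^ 2 / 2 - 0 ^ 2 / 2) / 2) := by
      have he : ∀ y : ℝ, (1 : ℝ) - (x + y) / 2 = 1 - (x / 2 + y / 2) := by intro y; ring
      simp_rw [he]
      rw [intervalIntegral.integral_sub (intervalIntegrable_const)
          ((intervalIntegrable_const).add (hI 0 x)),
        intervalIntegral.integral_add intervalIntegrable_const (hI 0 x)]
      simp only [intervalIntegral.integral_div, integral_id,
        intervalIntegral.integral_const, smul_eq_mul]
      ring
    have h2 : (∫ y in x..(1 : ℝ), (x + y) / 2)
        = x / 2 * (1 - x) + (1 ^ 2 / 2 - x ^ 2 / 2) / 2 := by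
      have he : ∀ y : ℝ, (x + y) / 2 = x / 2 + y / 2 := by intro y; ring
      simp_rw [he]
      rw [intervalIntegral.integral_add intervalIntegrable_const (hI x 1)]
      simp only [intervalIntegral.integral_div, integral_id,
        intervalIntegral.integral_const, smul_eq_mul]
      ring
    rw [h1, h2]; ring
  · ring
end

section
/- Let f_x : ℝ → ℝ and f_z : ℝ → ℝ each be concave on [0,∞) and nonincreasing on [0,∞), and let d₁ > 0 and d₂ > 0 be real numbers. Then at least one of the following holds: 2·f_x(d₁) ≥ f_x(0) + f_x(d₁+d₂), or 2·f_z(d₂) ≥ f_z(0) + f_z(d₁+d₂). -/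
/-! Midpoint concavity gives `f 0 + f (2a) ≤ 2 f a`, and monotonicity lets `2a` be replaced by
the larger `a + b` when `a ≤ b`. Applying this to the participant on the side of the smaller gap
proves the theorem. -/

open Set

theorem ConcaveOn.add_le_two_mul_apply_midpoint {s : Set ℝ} {f : ℝ → ℝ} (hf : ConcaveOn ℝ s f)
    {x y : ℝ} (hx : x ∈ s) (hy : y ∈ s) : f x + f y ≤ 2 * f ((x + y) / 2) := by
  have h := hf.2 hx hy (by norm_num : (0 : ℝ) ≤ 1 / 2) (by norm_num : (0 : ℝ) ≤ 1 / 2)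
    (by norm_num)
  simp only [smul_eq_mul] at h
  rw [show 1 / 2 * x + 1 / 2 * y = (x + y) / 2 by ring] at h
  linarith

theorem ConcaveOn.add_apply_add_le_two_mul_of_le {f : ℝ → ℝ}
    (hconc : ConcaveOn ℝ (Ici 0) f) (hanti : AntitoneOn f (Ici 0))
    {a b : ℝ} (ha : 0 ≤ a) (hab : a ≤ b) : f 0 + f (a + b) ≤ 2 * f a :=
  calc f 0 + f (a + b) ≤ f 0 + f (2 * a) := by
        gcongr
        exact hanti (mem_Ici.2 (by linarith)) (mem_Ici.2 (by linarith)) (by linarith)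
    _ ≤ 2 * f ((0 + 2 * a) / 2) :=
        hconc.add_le_two_mul_apply_midpoint self_mem_Ici (mem_Ici.2 (by linarith))
    _ = 2 * f a := by congr 2; ring

theorem one_side_prefers_median_win
    (fx fz : ℝ → ℝ)
    (hfx_conc : ConcaveOn ℝ (Set.Ici (0 : ℝ)) fx)
    (hfx_anti : AntitoneOn fx (Set.Ici (0 : ℝ)))
    (hfz_conc : ConcaveOn ℝ (Set.Ici (0 : ℝ)) fz)
    (hfz_anti : AntitoneOn fz (Set.Ici (0 : ℝ)))
    (d₁ d₂ : ℝ) (hd₁ : 0 < d₁) (hd₂ : 0 < d₂) :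
    2 * fx d₁ ≥ fx 0 + fx (d₁ + d₂) ∨ 2 * fz d₂ ≥ fz 0 + fz (d₁ + d₂) := by
  rcases le_total d₁ d₂ with h | h
  · exact Or.inl (hfx_conc.add_apply_add_le_two_mul_of_le hfx_anti hd₁.le h)
  · rw [add_comm d₁ d₂]
    exact Or.inr (hfz_conc.add_apply_add_le_two_mul_of_le hfz_anti hd₂.le h)
end

section
/- Fix integers n ≥ 4 and l with 1 ≤ l and l + 2 ≤ n, and let Δp be as defined below. Let x < y < z be real numbers, let v₁ ≤ v₂ ≤ … ≤ v_n be real numbers with v_l = v_{l+1} = v_{l+2} = y, and let f_x, f_z : ℝ → ℝ each be concave on [0,∞) and nonincreasing on [0,∞). Then at least one of the following holds: ∑_{i=1}^{n} Δp(i)·f_x(|x − v_i|) ≥ 0, or ∑_{i=1}^{n} Δp(i)·f_z(|z − v_i|) ≥ 0. -/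
/-!
Summation by parts turns `∑ Δp(i) g(v i)` into `-∑ₖ Pₖ (g(v (k+1)) - g(v k))`, where `Pₖ` are the
prefix sums of `Δp`. Comparing partial sums of the binomial rows `n - 1` and `n - 4` shows that
`Pₖ ≤ 0` before the tied block, `Pₖ ≥ 0` after it, and the total is `0`. For `g t = f |w - t|`,
which is concave on `ℝ`, subtract a supergradient line `c t` at `y`: what remains increases up to
`y` and decreases after it, so `∑ Δp(i) g(v i) ≥ c ∑ Δp(i) v i`, and `c (w - y) ≥ 0` because `g`
peaks at `w`. Whatever the sign of `∑ Δp(i) v i`, one of `w = x`, `w = z` has `c` of that sign.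
-/

section Concavity

open Set

theorem ConvexOn.exists_forall_add_mul_sub_le {φ : ℝ → ℝ} (hφ : ConvexOn ℝ univ φ) (y : ℝ) :
    ∃ c, ∀ t, φ y + c * (t - y) ≤ φ t := by
  have hy : y ∈ interior univ := by simp
  refine ⟨derivWithin φ (Iio y) y, fun t => ?_⟩
  rcases lt_trichotomy t y with hty | rfl | hyt
  · have h := hφ.slope_le_leftDeriv_of_mem_interior (mem_univ t) hy hty
    rw [slope_def_field, div_le_iff₀ (sub_pos.2 hty)] at h
    linarith
  · simp
  · have h := (hφ.leftDeriv_le_rightDeriv_of_mem_interior hy).trans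
      (hφ.rightDeriv_le_slope_of_mem_interior hy (mem_univ t) hyt)
    rw [slope_def_field, le_div_iff₀ (sub_pos.2 hyt)] at h
    linarith

theorem ConcaveOn.monotoneOn_Iic_of_forall_le {h : ℝ → ℝ} (hh : ConcaveOn ℝ univ h) {y : ℝ}
    (hmax : ∀ t, h t ≤ h y) : MonotoneOn h (Iic y) := fun a _ _ hb hab =>
  (le_min le_rfl (hmax a)).trans (hh.min_le_of_mem_Icc (mem_univ _) (mem_univ y) ⟨hab, hb⟩)

theorem ConcaveOn.antitoneOn_Ici_of_forall_le {h : ℝ → ℝ} (hh : ConcaveOn ℝ univ h) {y : ℝ}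
    (hmax : ∀ t, h t ≤ h y) : AntitoneOn h (Ici y) := fun _ ha b _ hab =>
  (le_min (hmax b) le_rfl).trans (hh.min_le_of_mem_Icc (mem_univ y) (mem_univ b) ⟨ha, hab⟩)

theorem concaveOn_comp_abs_sub {f : ℝ → ℝ} (hc : ConcaveOn ℝ (Ici 0) f)
    (ha : AntitoneOn f (Ici 0)) (w : ℝ) : ConcaveOn ℝ univ (fun t => f |w - t|) := by
  have himage : (fun t => |w - t|) '' univ = Ici 0 := by
    ext r
    simp only [image_univ, mem_range, mem_Ici]
    exact ⟨fun ⟨t, ht⟩ => ht ▸ abs_nonneg _, fun hr => ⟨w - r, by simp [abs_of_nonneg hr]⟩⟩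
  have hconv : ConvexOn ℝ univ (fun t => |w - t|) := by
    simpa [Real.dist_eq, abs_sub_comm] using convexOn_univ_dist w
  exact (himage ▸ hc).comp_convexOn hconv (himage ▸ ha)

/-- `c` is a supergradient of `t ↦ f |w - t|` at `y`. -/
theorem exists_unimodal_sub_mul {f : ℝ → ℝ} (hc : ConcaveOn ℝ (Ici 0) f)
    (ha : AntitoneOn f (Ici 0)) (w y : ℝ) :
    ∃ c, 0 ≤ c * (w - y) ∧ MonotoneOn (fun t => f |w - t| - c * t) (Iic y) ∧
      AntitoneOn (fun t => f |w - t| - c * t) (Ici y) := by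
  have hg := concaveOn_comp_abs_sub hc ha w
  obtain ⟨d, hd⟩ := hg.neg.exists_forall_add_mul_sub_le y
  have hh : ConcaveOn ℝ univ (fun t => f |w - t| - -d * t) :=
    hg.sub ((LinearMap.mul ℝ ℝ (-d)).convexOn convex_univ)
  have hmax : ∀ t, f |w - t| - -d * t ≤ f |w - y| - -d * y := fun t => by
    have := hd t
    simp only [Pi.neg_apply] at this
    linarith
  refine ⟨-d, ?_, hh.monotoneOn_Iic_of_forall_le hmax, hh.antitoneOn_Ici_of_forall_le hmax⟩
  have hfw : f |w - y| ≤ f |w - w| := by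
    rw [sub_self, abs_zero]
    exact ha (mem_Ici.2 le_rfl) (mem_Ici.2 (abs_nonneg _)) (abs_nonneg _)
  linarith [hmax w]

end Concavity

open Finset

theorem sum_range_choose_succ_eq (M k : ℕ) :
    ∑ i ∈ range (k + 1), (M + 1).choose i
      = ∑ i ∈ range (k + 1), M.choose i + ∑ i ∈ range k, M.choose i := by
  rw [sum_range_succ', sum_range_succ' (M.choose)]
  simp only [Nat.choose_succ_succ', sum_add_distrib, Nat.choose_zero_right]
  ring

theorem sum_range_choose_add_le (M r k : ℕ) :
    ∑ i ∈ range k, (M + r).choose i ≤ 2 ^ r * ∑ i ∈ range k, M.choose i := by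
  induction r with
  | zero => simp
  | succ r ih =>
    have hstep : ∑ i ∈ range k, (M + r + 1).choose i ≤ 2 * ∑ i ∈ range k, (M + r).choose i := by
      cases k with
      | zero => simp
      | succ k =>
        rw [sum_range_choose_succ_eq, sum_range_succ _ k]
        omega
    calc ∑ i ∈ range k, (M + (r + 1)).choose i ≤ 2 * ∑ i ∈ range k, (M + r).choose i := hstep
      _ ≤ 2 ^ (r + 1) * ∑ i ∈ range k, M.choose i := by
          rw [pow_succ', mul_assoc]; exact Nat.mul_le_mul_left 2 ih

theorem le_sum_range_choose_add (M r k : ℕ) :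
    2 ^ r * ∑ i ∈ range k, M.choose i ≤ ∑ i ∈ range (k + r), (M + r).choose i := by
  induction r with
  | zero => simp
  | succ r ih =>
    have hstep : 2 * ∑ i ∈ range (k + r), (M + r).choose i
        ≤ ∑ i ∈ range (k + r + 1), (M + r + 1).choose i := by
      rw [sum_range_choose_succ_eq, sum_range_succ _ (k + r)]
      omega
    calc 2 ^ (r + 1) * ∑ i ∈ range k, M.choose i
        ≤ 2 * ∑ i ∈ range (k + r), (M + r).choose i := by
          rw [pow_succ', mul_assoc]; exact Nat.mul_le_mul_left 2 ih
      _ ≤ ∑ i ∈ range (k + (r + 1)), (M + (r + 1)).choose i := hstep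

/-- `Δp (i + 1)` for `n = m + 4` and `l = j + 1`: balls are indexed from `0`, the tied balls are
`j, j + 1, j + 2`, and ball `i > j + 2` of `P` is ball `i - 3` of `Q`. -/
noncomputable def winProbDiff (m j i : ℕ) : ℝ :=
  (1 / 2 : ℝ) ^ (m + 3) * (m + 3).choose i -
    if i < j then (1 / 2 : ℝ) ^ m * m.choose i
    else if i < j + 3 then 0
    else (1 / 2 : ℝ) ^ m * m.choose (i - 3)

theorem sum_range_winProbDiff_of_le {m j k : ℕ} (hk : k ≤ j) :
    ∑ i ∈ range k, winProbDiff m j i = (1 / 2) ^ (m + 3) *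
      (∑ i ∈ range k, ((m + 3).choose i : ℝ) - 2 ^ 3 * ∑ i ∈ range k, (m.choose i : ℝ)) := by
  induction k with
  | zero => simp
  | succ k ih =>
    rw [sum_range_succ, ih (by omega), winProbDiff, if_pos (by omega)]
    simp only [sum_range_succ]
    ring

theorem sum_range_winProbDiff_of_ge {m j k : ℕ} (hk : j + 3 ≤ k) :
    ∑ i ∈ range k, winProbDiff m j i = (1 / 2) ^ (m + 3) *
      (∑ i ∈ range k, ((m + 3).choose i : ℝ) - 2 ^ 3 * ∑ i ∈ range (k - 3), (m.choose i : ℝ)) := by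
  induction k, hk using Nat.le_induction with
  | base =>
    rw [sum_range_succ, sum_range_succ, sum_range_succ, sum_range_winProbDiff_of_le le_rfl,
      Nat.add_sub_cancel]
    simp [winProbDiff, show ¬ j + 1 < j by omega, show ¬ j + 2 < j by omega, sum_range_succ]
    ring
  | succ k hk ih =>
    rw [sum_range_succ, ih, winProbDiff, if_neg (by omega), if_neg (by omega),
      show k + 1 - 3 = k - 3 + 1 by omega, sum_range_succ, sum_range_succ]
    ring

theorem sum_range_winProbDiff_nonpos {m j k : ℕ} (hk : k ≤ j) :
    ∑ i ∈ range k, winProbDiff m j i ≤ 0 := by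
  rw [sum_range_winProbDiff_of_le hk]
  have h := sum_range_choose_add_le m 3 k
  refine mul_nonpos_of_nonneg_of_nonpos (by positivity) (sub_nonpos.2 ?_)
  exact_mod_cast h

theorem sum_range_winProbDiff_nonneg {m j k : ℕ} (hk : j + 3 ≤ k) :
    0 ≤ ∑ i ∈ range k, winProbDiff m j i := by
  rw [sum_range_winProbDiff_of_ge hk]
  have h := le_sum_range_choose_add m 3 (k - 3)
  rw [Nat.sub_add_cancel (by omega)] at h
  refine mul_nonneg (by positivity) (sub_nonneg.2 ?_)
  exact_mod_cast h

theorem sum_range_winProbDiff_eq_zero {m j : ℕ} (hj : j + 3 ≤ m + 4) :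
    ∑ i ∈ range (m + 4), winProbDiff m j i = 0 := by
  rw [sum_range_winProbDiff_of_ge hj, show m + 4 - 3 = m + 1 by rfl]
  have h₁ := Nat.sum_range_choose (m + 3)
  have h₂ := Nat.sum_range_choose m
  push_cast [show m + 4 = m + 3 + 1 by rfl, ← Nat.cast_sum, h₁, h₂]
  ring

theorem sum_mul_nonneg_of_prefix_sums (p b : ℕ → ℝ) (n : ℕ) (hsum : ∑ i ∈ range n, p i = 0)
    (hprefix : ∀ i < n - 1, (b (i + 1) - b i) * ∑ k ∈ range (i + 1), p k ≤ 0) :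
    0 ≤ ∑ i ∈ range n, p i * b i := by
  have h := sum_range_by_parts b p n
  simp only [smul_eq_mul, hsum, mul_zero, zero_sub] at h
  simp_rw [mul_comm (p _)]
  rw [h, neg_nonneg]
  exact sum_nonpos fun i hi => hprefix i (mem_range.1 hi)

theorem mul_sum_le_sum_mul_comp (p u : ℕ → ℝ) (g : ℝ → ℝ) {n j : ℕ} {c y : ℝ}
    (hsum : ∑ i ∈ range n, p i = 0)
    (hneg : ∀ k ≤ j, ∑ i ∈ range k, p i ≤ 0)
    (hpos : ∀ k, j + 3 ≤ k → 0 ≤ ∑ i ∈ range k, p i)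
    (hu : ∀ a b, a ≤ b → b < n → u a ≤ u b) (hjn : j + 2 < n)
    (hblock : ∀ i, j ≤ i → i ≤ j + 2 → u i = y)
    (hmono : MonotoneOn (fun t => g t - c * t) (Set.Iic y))
    (hanti : AntitoneOn (fun t => g t - c * t) (Set.Ici y)) :
    c * ∑ i ∈ range n, p i * u i ≤ ∑ i ∈ range n, p i * g (u i) := by
  set h := fun t => g t - c * t
  have hsplit : ∑ i ∈ range n, p i * g (u i)
      = ∑ i ∈ range n, p i * h (u i) + c * ∑ i ∈ range n, p i * u i := by
    rw [mul_sum, ← sum_add_distrib]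
    exact sum_congr rfl fun i _ => by ring
  suffices 0 ≤ ∑ i ∈ range n, p i * h (u i) by linarith
  refine sum_mul_nonneg_of_prefix_sums p (fun i => h (u i)) n hsum fun i hi => ?_
  have hstep : u i ≤ u (i + 1) := hu i (i + 1) (by omega) (by omega)
  rcases lt_or_ge i j with hij | hji
  · have hy : u (i + 1) ≤ y := hblock j le_rfl (by omega) ▸ hu (i + 1) j (by omega) (by omega)
    exact mul_nonpos_of_nonneg_of_nonpos
      (sub_nonneg.2 (hmono (hstep.trans hy) hy hstep)) (hneg (i + 1) (by omega))
  rcases le_or_gt i (j + 1) with hij | hji'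
  · rw [hblock i hji (by omega), hblock (i + 1) (by omega) (by omega), sub_self, zero_mul]
  · have hy : y ≤ u i := hblock (j + 2) (by omega) le_rfl ▸ hu (j + 2) i (by omega) (by omega)
    exact mul_nonpos_of_nonpos_of_nonneg
      (sub_nonpos.2 (hanti hy (hy.trans hstep) hstep)) (hpos (i + 1) (by omega))

theorem existence_lemma
    (n l : ℕ) (hn : 4 ≤ n) (hl : 1 ≤ l) (hln : l + 2 ≤ n)
    (Δp : ℕ → ℝ)
    (hΔp₁ : ∀ i : ℕ, 1 ≤ i → i ≤ l - 1 →
      Δp i = (1 / 2 : ℝ) ^ (n - 1) * ((n - 1).choose (i - 1) : ℝ)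
           - (1 / 2 : ℝ) ^ (n - 4) * ((n - 4).choose (i - 1) : ℝ))
    (hΔp₂ : ∀ i : ℕ, l ≤ i → i ≤ l + 2 →
      Δp i = (1 / 2 : ℝ) ^ (n - 1) * ((n - 1).choose (i - 1) : ℝ))
    (hΔp₃ : ∀ i : ℕ, l + 3 ≤ i → i ≤ n →
      Δp i = (1 / 2 : ℝ) ^ (n - 1) * ((n - 1).choose (i - 1) : ℝ)
           - (1 / 2 : ℝ) ^ (n - 4) * ((n - 4).choose (i - 4) : ℝ))
    (x y z : ℝ) (hxy : x < y) (hyz : y < z)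
    (v : ℕ → ℝ)
    (hvmono : ∀ i j : ℕ, 1 ≤ i → i ≤ j → j ≤ n → v i ≤ v j)
    (hvl : v l = y) (hvl1 : v (l + 1) = y) (hvl2 : v (l + 2) = y)
    (fx fz : ℝ → ℝ)
    (hfx_conc : ConcaveOn ℝ (Set.Ici (0 : ℝ)) fx)
    (hfx_anti : AntitoneOn fx (Set.Ici (0 : ℝ)))
    (hfz_conc : ConcaveOn ℝ (Set.Ici (0 : ℝ)) fz)
    (hfz_anti : AntitoneOn fz (Set.Ici (0 : ℝ))) :
    0 ≤ ∑ i ∈ Finset.Icc 1 n, Δp i * fx |x - v i| ∨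
    0 ≤ ∑ i ∈ Finset.Icc 1 n, Δp i * fz |z - v i| := by
  obtain ⟨m, rfl⟩ : ∃ m, n = m + 4 := ⟨n - 4, by omega⟩
  obtain ⟨j, rfl⟩ : ∃ j, l = j + 1 := ⟨l - 1, by omega⟩
  set u : ℕ → ℝ := fun i => v (i + 1)
  have hΔp : ∀ i < m + 4, Δp (i + 1) = winProbDiff m j i := by
    intro i hi
    rcases lt_or_ge i j with hij | hji
    · simpa [winProbDiff, hij] using hΔp₁ (i + 1) (by omega) (by omega)
    rcases lt_or_ge i (j + 3) with hij' | hji'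
    · simpa [winProbDiff, hij', hji.not_gt] using hΔp₂ (i + 1) (by omega) (by omega)
    · simpa [winProbDiff, hji.not_gt, hji'.not_gt] using hΔp₃ (i + 1) (by omega) (by omega)
  have hsum : ∀ g : ℝ → ℝ, ∑ i ∈ Icc 1 (m + 4), Δp i * g (v i)
      = ∑ i ∈ range (m + 4), winProbDiff m j i * g (u i) := by
    intro g
    rw [← Ico_add_one_right_eq_Icc, sum_Ico_eq_sum_range, Nat.add_sub_cancel]
    exact sum_congr rfl fun i hi => by rw [add_comm 1 i, hΔp i (mem_range.1 hi)]
  have hbound : ∀ (f : ℝ → ℝ) (w : ℝ), ConcaveOn ℝ (Set.Ici 0) f → AntitoneOn f (Set.Ici 0) →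
      ∃ c, 0 ≤ c * (w - y) ∧ c * ∑ i ∈ range (m + 4), winProbDiff m j i * u i
        ≤ ∑ i ∈ range (m + 4), winProbDiff m j i * f |w - u i| := by
    intro f w hconc hanti
    obtain ⟨c, hc, hmono, hanti'⟩ := exists_unimodal_sub_mul hconc hanti w y
    refine ⟨c, hc, mul_sum_le_sum_mul_comp _ u _ (sum_range_winProbDiff_eq_zero (by omega))
      (fun k hk => sum_range_winProbDiff_nonpos hk) (fun k hk => sum_range_winProbDiff_nonneg hk)
      (fun a b hab hb => hvmono _ _ (by omega) (by omega) (by omega)) (by omega) ?_ hmono hanti'⟩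
    intro i hji hij
    obtain rfl | rfl | rfl : i = j ∨ i = j + 1 ∨ i = j + 2 := by omega
    exacts [hvl, hvl1, hvl2]
  obtain ⟨cx, hcx, hx⟩ := hbound fx x hfx_conc hfx_anti
  obtain ⟨cz, hcz, hz⟩ := hbound fz z hfz_conc hfz_anti
  rw [hsum fun t => fx |x - t|, hsum fun t => fz |z - t|]
  rcases le_total 0 (∑ i ∈ range (m + 4), winProbDiff m j i * u i) with hM | hM
  · exact Or.inr (le_trans (mul_nonneg (nonneg_of_mul_nonneg_left hcz (by linarith)) hM) hz)
  · exact Or.inl (le_trans (mul_nonneg_of_nonpos_of_nonpos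
      (nonpos_of_mul_nonneg_left hcx (by linarith)) hM) hx)
end

section
/- Fix integers n ≥ 4 and l with 1 ≤ l and l + 2 ≤ n, and let Δp be as defined below. Let x < y < z be real numbers, let v₁ ≤ v₂ ≤ … ≤ v_n be real numbers with v_l = v_{l+1} = v_{l+2} = y, and define the clamped positions v′_i = x if v_i < x, v′_i = z if v_i > z, and v′_i = v_i otherwise. Let f_x, f_z : ℝ → ℝ each be concave on [0,∞) and nonincreasing on [0,∞). Then ∑_{i=1}^{n} Δp(i)·f_x(|x − v_i|) ≥ ∑_{i=1}^{n} Δp(i)·f_x(|x − v′_i|), and ∑_{i=1}^{n} Δp(i)·f_z(|z − v_i|) ≥ ∑_{i=1}^{n} Δp(i)·f_z(|z − v′_i|). -/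
/-!
The three balls at `y` are not moved by the clamping, so they contribute nothing. On either
side of them, `Δp i` is the difference of the `Bin(n - 1, 1/2)` and `Bin(n - 4, 1/2)` weights
(after reflecting `i ↦ n - i` on the right, using `C(a, b) = C(a, a - b)`). Adding trials only
lowers the lower tail of a binomial distribution, so these weights have nonpositive partial
sums. For `w ∈ [x, z]`, the difference `f |w - v i| - f |w - v' i|` is nonpositive and
increases towards the balls at `y`, so Abel summation makes its weighted sum nonnegative.
-/

open Finset

theorem sum_range_choose_succ_le (m k : ℕ) :
    ∑ j ∈ range k, (m + 1).choose j ≤ 2 * ∑ j ∈ range k, m.choose j := by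
  cases k with
  | zero => simp
  | succ k =>
    have pascal : ∑ j ∈ range (k + 1), (m + 1).choose j
        = ∑ j ∈ range k, m.choose j + ∑ j ∈ range (k + 1), m.choose j := by
      simp only [sum_range_succ' _ k, Nat.choose_succ_succ, sum_add_distrib,
        Nat.choose_zero_right]
      ring
    have := sum_range_succ (fun j => m.choose j) k
    omega

/-- The probability that a `Bin(m, 1/2)` variable is less than `k`. -/
noncomputable def binomLowerTail (m k : ℕ) : ℝ :=
  (1 / 2 : ℝ) ^ m * ∑ j ∈ range k, (m.choose j : ℝ)

theorem binomLowerTail_antitone (k : ℕ) : Antitone fun m => binomLowerTail m k := by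
  refine antitone_nat_of_succ_le fun m => ?_
  have h : ∑ j ∈ range k, ((m + 1).choose j : ℝ)
      ≤ 2 * ∑ j ∈ range k, (m.choose j : ℝ) :=
    mod_cast sum_range_choose_succ_le m k
  calc binomLowerTail (m + 1) k
      = (1 / 2 : ℝ) ^ m * ((∑ j ∈ range k, ((m + 1).choose j : ℝ)) / 2) := by
        rw [binomLowerTail, pow_succ]; ring
    _ ≤ binomLowerTail m k := by
        rw [binomLowerTail]; gcongr; linarith

theorem sum_mul_nonneg_of_partial_sums_nonpos {p e : ℕ → ℝ} {K : ℕ}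
    (hp : ∀ k ≤ K, ∑ j ∈ range k, p j ≤ 0) (he : MonotoneOn e (Set.Iio K))
    (he0 : ∀ j < K, e j ≤ 0) :
    0 ≤ ∑ j ∈ range K, p j * e j := by
  rcases K.eq_zero_or_pos with rfl | hK
  · simp
  have abel := sum_range_by_parts e p (n := K)
  simp only [smul_eq_mul] at abel
  simp only [mul_comm (p _), abel, sub_nonneg]
  calc ∑ i ∈ range (K - 1), (e (i + 1) - e i) * ∑ j ∈ range (i + 1), p j
      ≤ 0 := sum_nonpos fun i hi => by
        have hi : i + 1 < K := by rw [mem_range] at hi; omega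
        exact mul_nonpos_of_nonneg_of_nonpos
          (sub_nonneg.2 (he (by simp; omega) (by simpa using hi) i.le_succ)) (hp _ hi.le)
    _ ≤ e (K - 1) * ∑ j ∈ range K, p j :=
        mul_nonneg_of_nonpos_of_nonpos (he0 _ (by omega)) (hp K le_rfl)

theorem sum_binom_sub_mul_nonneg {m m' : ℕ} (hm : m ≤ m') {K : ℕ} {e : ℕ → ℝ}
    (he : MonotoneOn e (Set.Iio K)) (he0 : ∀ j < K, e j ≤ 0) :
    0 ≤ ∑ j ∈ range K,
      ((1 / 2 : ℝ) ^ m' * m'.choose j - (1 / 2 : ℝ) ^ m * m.choose j) * e j := by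
  refine sum_mul_nonneg_of_partial_sums_nonpos (fun k _ => ?_) he he0
  rw [sum_sub_distrib, ← mul_sum, ← mul_sum, sub_nonpos]
  exact binomLowerTail_antitone k hm

theorem ite_clamp_eq_max_min {x z : ℝ} (hxz : x ≤ z) (u : ℝ) :
    (if u < x then x else if z < u then z else u) = max x (min u z) := by
  split_ifs with hux hzu
  · rw [min_eq_left (hux.le.trans hxz), max_eq_left hux.le]
  · rw [min_eq_right hzu.le, max_eq_right hxz]
  · rw [min_eq_left (not_lt.1 hzu), max_eq_right (not_lt.1 hux)]

def clampDiff (f : ℝ → ℝ) (x z w u : ℝ) : ℝ := f |w - u| - f |w - max x (min u z)|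

section clampDiff

variable {f : ℝ → ℝ} {x z w : ℝ}

theorem clampDiff_eq_zero {u : ℝ} (hxu : x ≤ u) (huz : u ≤ z) : clampDiff f x z w u = 0 := by
  rw [clampDiff, min_eq_left huz, max_eq_right hxu, sub_self]

theorem clampDiff_nonpos (hf : AntitoneOn f (Set.Ici 0)) (hxw : x ≤ w) (hwz : w ≤ z) (u : ℝ) :
    clampDiff f x z w u ≤ 0 := by
  refine sub_nonpos.2 (hf (Set.mem_Ici.2 (abs_nonneg _)) (Set.mem_Ici.2 (abs_nonneg _)) ?_)
  rcases le_total u z with huz | hzu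
  · rcases le_total x u with hxu | hux
    · simp [min_eq_left huz, max_eq_right hxu]
    · rw [min_eq_left huz, max_eq_left hux, abs_of_nonneg (sub_nonneg.2 hxw),
        abs_of_nonneg (by linarith)]
      linarith
  · rw [min_eq_right hzu, max_eq_right (hxw.trans hwz), abs_of_nonpos (sub_nonpos.2 hwz),
      abs_of_nonpos (by linarith)]
    linarith

theorem clampDiff_monotoneOn (hf : AntitoneOn f (Set.Ici 0)) (hxw : x ≤ w) :
    MonotoneOn (clampDiff f x z w) (Set.Iic z) := by
  intro u hu u' hu' huu'
  simp only [Set.mem_Iic] at hu hu'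
  have below {t : ℝ} (htx : t ≤ x) (htz : t ≤ z) :
      clampDiff f x z w t = f (w - t) - f (w - x) := by
    rw [clampDiff, min_eq_left htz, max_eq_left htx, abs_of_nonneg (by linarith),
      abs_of_nonneg (by linarith)]
  have hmem {t : ℝ} (htw : t ≤ w) : w - t ∈ Set.Ici (0 : ℝ) := sub_nonneg.2 htw
  rcases le_total u' x with hu'x | hxu'
  · rw [below (huu'.trans hu'x) hu, below hu'x hu']
    exact sub_le_sub_right
      (hf (hmem (hu'x.trans hxw)) (hmem (huu'.trans hu'x |>.trans hxw)) (by linarith)) _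
  · rw [clampDiff_eq_zero hxu' hu']
    rcases le_total u x with hux | hxu
    · rw [below hux hu, sub_nonpos]
      exact hf (hmem hxw) (hmem (hux.trans hxw)) (by linarith)
    · exact (clampDiff_eq_zero hxu hu).le

theorem clampDiff_antitoneOn (hf : AntitoneOn f (Set.Ici 0)) (hxz : x ≤ z) (hwz : w ≤ z) :
    AntitoneOn (clampDiff f x z w) (Set.Ici x) := by
  intro u hu u' hu' huu'
  simp only [Set.mem_Ici] at hu hu'
  have above {t : ℝ} (hzt : z ≤ t) : clampDiff f x z w t = f (t - w) - f (z - w) := by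
    rw [clampDiff, min_eq_right hzt, max_eq_right hxz, abs_sub_comm, abs_of_nonneg (by linarith),
      abs_sub_comm, abs_of_nonneg (by linarith)]
  have hmem {t : ℝ} (hwt : w ≤ t) : t - w ∈ Set.Ici (0 : ℝ) := sub_nonneg.2 hwt
  rcases le_total z u with hzu | huz
  · rw [above hzu, above (hzu.trans huu')]
    exact sub_le_sub_right
      (hf (hmem (hwz.trans hzu)) (hmem (hwz.trans (hzu.trans huu'))) (by linarith)) _
  · rw [clampDiff_eq_zero hu huz]
    rcases le_total z u' with hzu' | hu'z
    · rw [above hzu', sub_nonpos]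
      exact hf (hmem hwz) (hmem (hwz.trans hzu')) (by linarith)
    · exact (clampDiff_eq_zero hu' hu'z).le

end clampDiff

theorem sum_Icc_eq_sum_three_blocks {M : Type*} [AddCommMonoid M] (F : ℕ → M) {n l : ℕ}
    (hl : 1 ≤ l) (hln : l + 2 ≤ n) :
    ∑ i ∈ Icc 1 n, F i = ∑ j ∈ range (l - 1), F (j + 1) + ∑ i ∈ Icc l (l + 2), F i
      + ∑ j ∈ range (n - l - 2), F (n - j) := by
  have left : ∑ i ∈ Ico 1 l, F i = ∑ j ∈ range (l - 1), F (j + 1) := by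
    rw [sum_Ico_eq_sum_range]
    exact sum_congr rfl fun j _ => by rw [add_comm]
  have right : ∑ i ∈ Ico (l + 2 + 1) (n + 1), F i = ∑ j ∈ range (n - l - 2), F (n - j) := by
    rw [sum_Ico_eq_sum_range, ← sum_range_reflect, show n + 1 - (l + 2 + 1) = n - l - 2 by omega]
    exact sum_congr rfl fun j hj => by rw [mem_range] at hj; congr 1; omega
  rw [← Ico_add_one_right_eq_Icc, ← Ico_add_one_right_eq_Icc, ← left, ← right, add_assoc,
    sum_Ico_consecutive F (by omega) (by omega), sum_Ico_consecutive F hl (by omega)]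

theorem sum_mul_apply_abs_sub_clamp_le {n l : ℕ} (hl : 1 ≤ l) (hln : l + 2 ≤ n)
    {Δp : ℕ → ℝ}
    (hΔp₁ : ∀ i : ℕ, 1 ≤ i → i ≤ l - 1 →
      Δp i = (1 / 2 : ℝ) ^ (n - 1) * ((n - 1).choose (i - 1) : ℝ)
           - (1 / 2 : ℝ) ^ (n - 4) * ((n - 4).choose (i - 1) : ℝ))
    (hΔp₃ : ∀ i : ℕ, l + 3 ≤ i → i ≤ n →
      Δp i = (1 / 2 : ℝ) ^ (n - 1) * ((n - 1).choose (i - 1) : ℝ)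
           - (1 / 2 : ℝ) ^ (n - 4) * ((n - 4).choose (i - 4) : ℝ))
    {x y z w : ℝ} (hxy : x < y) (hyz : y < z) (hxw : x ≤ w) (hwz : w ≤ z)
    {v : ℕ → ℝ} (hvmono : ∀ i j : ℕ, 1 ≤ i → i ≤ j → j ≤ n → v i ≤ v j)
    (hvl : v l = y) (hvl2 : v (l + 2) = y)
    {f : ℝ → ℝ} (hf : AntitoneOn f (Set.Ici 0)) :
    ∑ i ∈ Icc 1 n, Δp i * f |w - max x (min (v i) z)|
      ≤ ∑ i ∈ Icc 1 n, Δp i * f |w - v i| := by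
  rw [← sub_nonneg, ← sum_sub_distrib]
  simp_rw [← mul_sub]
  change 0 ≤ ∑ i ∈ Icc 1 n, Δp i * clampDiff f x z w (v i)
  rw [sum_Icc_eq_sum_three_blocks _ hl hln]
  have left : 0 ≤ ∑ j ∈ range (l - 1), Δp (j + 1) * clampDiff f x z w (v (j + 1)) := by
    have hv {j : ℕ} (hj : j < l - 1) : v (j + 1) ≤ z :=
      (hvmono _ _ (by omega) (by omega) (by omega)).trans (hvl ▸ hyz.le)
    have hmono : MonotoneOn (fun j => clampDiff f x z w (v (j + 1))) (Set.Iio (l - 1)) := by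
      intro i hi j hj hij
      rw [Set.mem_Iio] at hi hj
      exact clampDiff_monotoneOn hf hxw (hv hi) (hv hj)
        (hvmono _ _ (by omega) (by omega) (by omega))
    convert sum_binom_sub_mul_nonneg (by omega : n - 4 ≤ n - 1) hmono
      (fun j _ => clampDiff_nonpos hf hxw hwz _) using 2 with j hj
    rw [mem_range] at hj
    rw [hΔp₁ _ (by omega) (by omega), Nat.add_sub_cancel]
  have middle : ∑ i ∈ Icc l (l + 2), Δp i * clampDiff f x z w (v i) = 0 := by
    refine sum_eq_zero fun i hi => ?_
    rw [mem_Icc] at hi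
    have hvi : v i = y := le_antisymm (hvl2 ▸ hvmono _ _ (by omega) hi.2 hln)
      (hvl ▸ hvmono _ _ hl hi.1 (by omega))
    rw [hvi, clampDiff_eq_zero hxy.le hyz.le, mul_zero]
  have right : 0 ≤ ∑ j ∈ range (n - l - 2), Δp (n - j) * clampDiff f x z w (v (n - j)) := by
    have hv {j : ℕ} (hj : j < n - l - 2) : x ≤ v (n - j) :=
      (hvl ▸ hxy.le).trans (hvmono _ _ hl (by omega) (by omega))
    have hmono : MonotoneOn (fun j => clampDiff f x z w (v (n - j))) (Set.Iio (n - l - 2)) := by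
      intro i hi j hj hij
      rw [Set.mem_Iio] at hi hj
      exact clampDiff_antitoneOn hf (hxw.trans hwz) hwz (hv hj) (hv hi)
        (hvmono _ _ (by omega) (by omega) (by omega))
    convert sum_binom_sub_mul_nonneg (by omega : n - 4 ≤ n - 1) hmono
      (fun j _ => clampDiff_nonpos hf hxw hwz _) using 2 with j hj
    rw [mem_range] at hj
    rw [hΔp₃ _ (by omega) (by omega), ← Nat.choose_symm (by omega : j ≤ n - 1),
      ← Nat.choose_symm (by omega : j ≤ n - 4), show n - j - 1 = n - 1 - j by omega,
      show n - j - 4 = n - 4 - j by omega]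
  linarith

theorem existence_lemma_partB_general
    (n l : ℕ) (hl : 1 ≤ l) (hln : l + 2 ≤ n)
    (Δp : ℕ → ℝ)
    (hΔp₁ : ∀ i : ℕ, 1 ≤ i → i ≤ l - 1 →
      Δp i = (1 / 2 : ℝ) ^ (n - 1) * ((n - 1).choose (i - 1) : ℝ)
           - (1 / 2 : ℝ) ^ (n - 4) * ((n - 4).choose (i - 1) : ℝ))
    (hΔp₃ : ∀ i : ℕ, l + 3 ≤ i → i ≤ n →
      Δp i = (1 / 2 : ℝ) ^ (n - 1) * ((n - 1).choose (i - 1) : ℝ)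
           - (1 / 2 : ℝ) ^ (n - 4) * ((n - 4).choose (i - 4) : ℝ))
    (x y z : ℝ) (hxy : x < y) (hyz : y < z)
    (v : ℕ → ℝ)
    (hvmono : ∀ i j : ℕ, 1 ≤ i → i ≤ j → j ≤ n → v i ≤ v j)
    (hvl : v l = y) (hvl2 : v (l + 2) = y)
    (v' : ℕ → ℝ)
    (hv' : ∀ i : ℕ, v' i = if v i < x then x else if z < v i then z else v i)
    (fx fz : ℝ → ℝ)
    (hfx_anti : AntitoneOn fx (Set.Ici (0 : ℝ)))
    (hfz_anti : AntitoneOn fz (Set.Ici (0 : ℝ))) :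
    (∑ i ∈ Finset.Icc 1 n, Δp i * fx |x - v i|
      ≥ ∑ i ∈ Finset.Icc 1 n, Δp i * fx |x - v' i|) ∧
    (∑ i ∈ Finset.Icc 1 n, Δp i * fz |z - v i|
      ≥ ∑ i ∈ Finset.Icc 1 n, Δp i * fz |z - v' i|) := by
  have hxz : x ≤ z := (hxy.trans hyz).le
  simp only [hv', ite_clamp_eq_max_min hxz, ge_iff_le]
  exact ⟨sum_mul_apply_abs_sub_clamp_le hl hln hΔp₁ hΔp₃ hxy hyz le_rfl hxz hvmono hvl hvl2
      hfx_anti,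
    sum_mul_apply_abs_sub_clamp_le hl hln hΔp₁ hΔp₃ hxy hyz hxz le_rfl hvmono hvl hvl2
      hfz_anti⟩

theorem existence_lemma_partB
    (n l : ℕ) (hn : 4 ≤ n) (hl : 1 ≤ l) (hln : l + 2 ≤ n)
    (Δp : ℕ → ℝ)
    (hΔp₁ : ∀ i : ℕ, 1 ≤ i → i ≤ l - 1 →
      Δp i = (1 / 2 : ℝ) ^ (n - 1) * ((n - 1).choose (i - 1) : ℝ)
           - (1 / 2 : ℝ) ^ (n - 4) * ((n - 4).choose (i - 1) : ℝ))
    (hΔp₂ : ∀ i : ℕ, l ≤ i → i ≤ l + 2 →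
      Δp i = (1 / 2 : ℝ) ^ (n - 1) * ((n - 1).choose (i - 1) : ℝ))
    (hΔp₃ : ∀ i : ℕ, l + 3 ≤ i → i ≤ n →
      Δp i = (1 / 2 : ℝ) ^ (n - 1) * ((n - 1).choose (i - 1) : ℝ)
           - (1 / 2 : ℝ) ^ (n - 4) * ((n - 4).choose (i - 4) : ℝ))
    (x y z : ℝ) (hxy : x < y) (hyz : y < z)
    (v : ℕ → ℝ)
    (hvmono : ∀ i j : ℕ, 1 ≤ i → i ≤ j → j ≤ n → v i ≤ v j)
    (hvl : v l = y) (hvl1 : v (l + 1) = y) (hvl2 : v (l + 2) = y)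
    (v' : ℕ → ℝ)
    (hv' : ∀ i : ℕ, v' i = if v i < x then x else if z < v i then z else v i)
    (fx fz : ℝ → ℝ)
    (hfx_conc : ConcaveOn ℝ (Set.Ici (0 : ℝ)) fx)
    (hfx_anti : AntitoneOn fx (Set.Ici (0 : ℝ)))
    (hfz_conc : ConcaveOn ℝ (Set.Ici (0 : ℝ)) fz)
    (hfz_anti : AntitoneOn fz (Set.Ici (0 : ℝ))) :
    (∑ i ∈ Finset.Icc 1 n, Δp i * fx |x - v i|
      ≥ ∑ i ∈ Finset.Icc 1 n, Δp i * fx |x - v' i|) ∧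
    (∑ i ∈ Finset.Icc 1 n, Δp i * fz |z - v i|
      ≥ ∑ i ∈ Finset.Icc 1 n, Δp i * fz |z - v' i|) :=
  existence_lemma_partB_general n l hl hln Δp hΔp₁ hΔp₃ x y z hxy hyz v hvmono hvl hvl2 v' hv' fx fz
    hfx_anti hfz_anti
end

section
/- Fix integers n ≥ 4 and l with 1 ≤ l and l + 2 ≤ n, and let Δp be as defined below. Then for every integer i with 1 ≤ i ≤ n: if 1 ≤ i ≤ l−1 and 2i < n then Δp(i) < 0; if 1 ≤ i ≤ l−1 and 2i ≥ n then Δp(i) > 0; if l ≤ i ≤ l+2 then Δp(i) > 0; if l+3 ≤ i ≤ n and 2i ≤ n+2 then Δp(i) > 0; and if l+3 ≤ i ≤ n and 2i > n+2 then Δp(i) < 0. -/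
private lemma idA (m k : ℕ) :
    (m+3).choose k * ((m+1-k)*(m+2-k)*(m+3-k))
      = m.choose k * ((m+1)*(m+2)*(m+3)) := by
  have h1 := Nat.choose_mul_succ_eq m k
  have h2 := Nat.choose_mul_succ_eq (m+1) k
  have h3 := Nat.choose_mul_succ_eq (m+2) k
  have e2 : m + 1 + 1 = m + 2 := rfl
  have e3 : m + 2 + 1 = m + 3 := rfl
  rw [e2] at h2
  rw [e3] at h3
  calc (m+3).choose k * ((m+1-k)*(m+2-k)*(m+3-k))
      = ((m+3).choose k * (m+3-k)) * (m+2-k) * (m+1-k) := by ring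
    _ = ((m+2).choose k * (m+3)) * (m+2-k) * (m+1-k) := by rw [← h3]
    _ = ((m+2).choose k * (m+2-k)) * (m+3) * (m+1-k) := by ring
    _ = ((m+1).choose k * (m+2)) * (m+3) * (m+1-k) := by rw [← h2]
    _ = ((m+1).choose k * (m+1-k)) * (m+2) * (m+3) := by ring
    _ = (m.choose k * (m+1)) * (m+2) * (m+3) := by rw [← h1]
    _ = m.choose k * ((m+1)*(m+2)*(m+3)) := by ring

private lemma idB (m j : ℕ) :
    (m+3).choose (j+3) * ((j+1)*(j+2)*(j+3))
      = m.choose j * ((m+1)*(m+2)*(m+3)) := by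
  have h1 := Nat.add_one_mul_choose_eq m j
  have h2 := Nat.add_one_mul_choose_eq (m+1) (j+1)
  have h3 := Nat.add_one_mul_choose_eq (m+2) (j+2)
  have f1 : m+1+1 = m+2 := rfl
  have f2 : j+1+1 = j+2 := rfl
  have f3 : m+2+1 = m+3 := rfl
  have f4 : j+2+1 = j+3 := rfl
  rw [f1, f2] at h2
  rw [f3, f4] at h3
  calc (m+3).choose (j+3) * ((j+1)*(j+2)*(j+3))
      = ((m+3).choose (j+3) * (j+3)) * ((j+1)*(j+2)) := by ring
    _ = ((m+3) * (m+2).choose (j+2)) * ((j+1)*(j+2)) := by rw [← h3]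
    _ = ((m+2).choose (j+2) * (j+2)) * ((j+1)*(m+3)) := by ring
    _ = ((m+2) * (m+1).choose (j+1)) * ((j+1)*(m+3)) := by rw [← h2]
    _ = ((m+1).choose (j+1) * (j+1)) * ((m+2)*(m+3)) := by ring
    _ = ((m+1) * m.choose j) * ((m+2)*(m+3)) := by rw [← h1]
    _ = m.choose j * ((m+1)*(m+2)*(m+3)) := by ring

private lemma caseA_lt (m k : ℕ) (hk : k ≤ m) (h2k : 2*k ≤ m+1) :
    (m+3).choose k < 8 * m.choose k := by
  have hid := idA m k
  have ha : m + 1 ≤ 2 * (m+1-k) := by omega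
  have hb : m + 3 ≤ 2 * (m+2-k) := by omega
  have hc : m + 5 ≤ 2 * (m+3-k) := by omega
  have hpos : 0 < (m+1-k)*(m+2-k)*(m+3-k) := by
    apply Nat.mul_pos
    apply Nat.mul_pos <;> omega
    omega
  have hP : (m+1)*(m+2)*(m+3) < 8 * ((m+1-k)*(m+2-k)*(m+3-k)) := by
    calc (m+1)*(m+2)*(m+3) < (m+1)*(m+3)*(m+5) := by nlinarith
      _ ≤ (2*(m+1-k)) * (2*(m+2-k)) * (2*(m+3-k)) := by
          apply Nat.mul_le_mul
          apply Nat.mul_le_mul ha hb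
          exact hc
      _ = 8 * ((m+1-k)*(m+2-k)*(m+3-k)) := by ring
  have hch : 0 < m.choose k := Nat.choose_pos hk
  have : (m+3).choose k * ((m+1-k)*(m+2-k)*(m+3-k))
      < (8 * m.choose k) * ((m+1-k)*(m+2-k)*(m+3-k)) := by
    rw [hid]
    calc m.choose k * ((m+1)*(m+2)*(m+3))
        < m.choose k * (8 * ((m+1-k)*(m+2-k)*(m+3-k))) :=
          mul_lt_mul_of_pos_left hP hch
      _ = (8 * m.choose k) * ((m+1-k)*(m+2-k)*(m+3-k)) := by ring
  exact Nat.lt_of_mul_lt_mul_right this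

private lemma caseA_gt (m k : ℕ) (hk : k ≤ m) (h2k : m + 2 ≤ 2*k) :
    8 * m.choose k < (m+3).choose k := by
  have hid := idA m k
  have ha : 2 * (m+1-k) ≤ m := by omega
  have hb : 2 * (m+2-k) ≤ m+2 := by omega
  have hc : 2 * (m+3-k) ≤ m+4 := by omega
  have hpos : 0 < (m+1-k)*(m+2-k)*(m+3-k) := by
    apply Nat.mul_pos
    apply Nat.mul_pos <;> omega
    omega
  have hP : 8 * ((m+1-k)*(m+2-k)*(m+3-k)) < (m+1)*(m+2)*(m+3) := by
    calc 8 * ((m+1-k)*(m+2-k)*(m+3-k))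
        = (2*(m+1-k)) * (2*(m+2-k)) * (2*(m+3-k)) := by ring
      _ ≤ m * (m+2) * (m+4) := by
          apply Nat.mul_le_mul
          apply Nat.mul_le_mul ha hb
          exact hc
      _ < (m+1)*(m+2)*(m+3) := by nlinarith
  have hch : 0 < m.choose k := Nat.choose_pos hk
  have : (8 * m.choose k) * ((m+1-k)*(m+2-k)*(m+3-k))
      < (m+3).choose k * ((m+1-k)*(m+2-k)*(m+3-k)) := by
    rw [hid]
    calc (8 * m.choose k) * ((m+1-k)*(m+2-k)*(m+3-k))
        = m.choose k * (8 * ((m+1-k)*(m+2-k)*(m+3-k))) := by ring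
      _ < m.choose k * ((m+1)*(m+2)*(m+3)) :=
          mul_lt_mul_of_pos_left hP hch
  exact Nat.lt_of_mul_lt_mul_right this

private lemma caseB_gt (m j : ℕ) (hj : j ≤ m) (h2j : 2*j + 2 ≤ m) :
    8 * m.choose j < (m+3).choose (j+3) := by
  have hid := idB m j
  have ha : 2 * (j+1) ≤ m := by omega
  have hb : 2 * (j+2) ≤ m+2 := by omega
  have hc : 2 * (j+3) ≤ m+4 := by omega
  have hpos : 0 < (j+1)*(j+2)*(j+3) := by positivity
  have hP : 8 * ((j+1)*(j+2)*(j+3)) < (m+1)*(m+2)*(m+3) := by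
    calc 8 * ((j+1)*(j+2)*(j+3)) = (2*(j+1)) * (2*(j+2)) * (2*(j+3)) := by ring
      _ ≤ m * (m+2) * (m+4) := by
          apply Nat.mul_le_mul
          apply Nat.mul_le_mul ha hb
          exact hc
      _ < (m+1)*(m+2)*(m+3) := by nlinarith
  have hch : 0 < m.choose j := Nat.choose_pos hj
  have : (8 * m.choose j) * ((j+1)*(j+2)*(j+3))
      < (m+3).choose (j+3) * ((j+1)*(j+2)*(j+3)) := by
    rw [hid]
    calc (8 * m.choose j) * ((j+1)*(j+2)*(j+3))
        = m.choose j * (8 * ((j+1)*(j+2)*(j+3))) := by ring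
      _ < m.choose j * ((m+1)*(m+2)*(m+3)) :=
          mul_lt_mul_of_pos_left hP hch
  exact Nat.lt_of_mul_lt_mul_right this

private lemma caseB_lt (m j : ℕ) (hj : j ≤ m) (h2j : m ≤ 2*j + 1) :
    (m+3).choose (j+3) < 8 * m.choose j := by
  have hid := idB m j
  have ha : m + 1 ≤ 2 * (j+1) := by omega
  have hb : m + 3 ≤ 2 * (j+2) := by omega
  have hc : m + 5 ≤ 2 * (j+3) := by omega
  have hpos : 0 < (j+1)*(j+2)*(j+3) := by positivity
  have hP : (m+1)*(m+2)*(m+3) < 8 * ((j+1)*(j+2)*(j+3)) := by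
    calc (m+1)*(m+2)*(m+3) < (m+1)*(m+3)*(m+5) := by nlinarith
      _ ≤ (2*(j+1)) * (2*(j+2)) * (2*(j+3)) := by
          apply Nat.mul_le_mul
          apply Nat.mul_le_mul ha hb
          exact hc
      _ = 8 * ((j+1)*(j+2)*(j+3)) := by ring
  have hch : 0 < m.choose j := Nat.choose_pos hj
  have : (m+3).choose (j+3) * ((j+1)*(j+2)*(j+3))
      < (8 * m.choose j) * ((j+1)*(j+2)*(j+3)) := by
    rw [hid]
    calc m.choose j * ((m+1)*(m+2)*(m+3))
        < m.choose j * (8 * ((j+1)*(j+2)*(j+3))) :=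
          mul_lt_mul_of_pos_left hP hch
      _ = (8 * m.choose j) * ((j+1)*(j+2)*(j+3)) := by ring
  exact Nat.lt_of_mul_lt_mul_right this

private lemma real_neg (m : ℕ) (C1 C2 : ℕ) (h : C1 < 8 * C2) :
    (1/2:ℝ)^(m+3) * (C1:ℝ) - (1/2:ℝ)^m * (C2:ℝ) < 0 := by
  have hp : (0:ℝ) < (1/2:ℝ)^m := by positivity
  have hc : (C1:ℝ) < 8 * (C2:ℝ) := by exact_mod_cast h
  have he : (1/2:ℝ)^(m+3) = (1/2:ℝ)^m * (1/8) := by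
    rw [pow_add]; norm_num
  rw [he]
  nlinarith

private lemma real_pos (m : ℕ) (C1 C2 : ℕ) (h : 8 * C2 < C1) :
    0 < (1/2:ℝ)^(m+3) * (C1:ℝ) - (1/2:ℝ)^m * (C2:ℝ) := by
  have hp : (0:ℝ) < (1/2:ℝ)^m := by positivity
  have hc : 8 * (C2:ℝ) < (C1:ℝ) := by exact_mod_cast h
  have he : (1/2:ℝ)^(m+3) = (1/2:ℝ)^m * (1/8) := by
    rw [pow_add]; norm_num
  rw [he]
  nlinarith

theorem sign_of_delta_p
    (n l : ℕ) (hn : 4 ≤ n) (hl : 1 ≤ l) (hln : l + 2 ≤ n)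
    (Δp : ℕ → ℝ)
    (hΔp₁ : ∀ i : ℕ, 1 ≤ i → i ≤ l - 1 →
      Δp i = (1 / 2 : ℝ) ^ (n - 1) * ((n - 1).choose (i - 1) : ℝ)
           - (1 / 2 : ℝ) ^ (n - 4) * ((n - 4).choose (i - 1) : ℝ))
    (hΔp₂ : ∀ i : ℕ, l ≤ i → i ≤ l + 2 →
      Δp i = (1 / 2 : ℝ) ^ (n - 1) * ((n - 1).choose (i - 1) : ℝ))
    (hΔp₃ : ∀ i : ℕ, l + 3 ≤ i → i ≤ n →
      Δp i = (1 / 2 : ℝ) ^ (n - 1) * ((n - 1).choose (i - 1) : ℝ)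
           - (1 / 2 : ℝ) ^ (n - 4) * ((n - 4).choose (i - 4) : ℝ)) :
    ∀ i : ℕ, 1 ≤ i → i ≤ n →
      (i ≤ l - 1 → 2 * i < n → Δp i < 0) ∧
      (i ≤ l - 1 → n ≤ 2 * i → 0 < Δp i) ∧
      (l ≤ i → i ≤ l + 2 → 0 < Δp i) ∧
      (l + 3 ≤ i → 2 * i ≤ n + 2 → 0 < Δp i) ∧
      (l + 3 ≤ i → n + 2 < 2 * i → Δp i < 0) := by
  obtain ⟨m, rfl⟩ : ∃ m, n = m + 4 := ⟨n - 4, by omega⟩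
  have e1 : m + 4 - 1 = m + 3 := by omega
  have e4 : m + 4 - 4 = m := by omega
  intro i h1 h2
  refine ⟨?_, ?_, ?_, ?_, ?_⟩
  · intro hil h2i
    have e := hΔp₁ i h1 hil
    rw [e1, e4] at e
    rw [e]
    have hk : i - 1 ≤ m := by omega
    exact real_neg m _ _ (caseA_lt m (i-1) hk (by omega))
  · intro hil h2i
    have e := hΔp₁ i h1 hil
    rw [e1, e4] at e
    rw [e]
    have hk : i - 1 ≤ m := by omega
    exact real_pos m _ _ (caseA_gt m (i-1) hk (by omega))
  · intro hli hil
    have e := hΔp₂ i hli hil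
    rw [e1] at e
    rw [e]
    have hch : 0 < (m+3).choose (i-1) := Nat.choose_pos (by omega)
    have : (0:ℝ) < ((m+3).choose (i-1) : ℝ) := by exact_mod_cast hch
    positivity
  · intro hli h2i
    have e := hΔp₃ i hli h2
    rw [e1, e4] at e
    rw [e]
    have hj : i - 4 ≤ m := by omega
    have hkey := caseB_gt m (i-4) hj (by omega)
    have hii : i - 1 = (i - 4) + 3 := by omega
    rw [hii]
    exact real_pos m _ _ hkey
  · intro hli h2i
    have e := hΔp₃ i hli h2
    rw [e1, e4] at e
    rw [e]
    have hj : i - 4 ≤ m := by omega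
    have hkey := caseB_lt m (i-4) hj (by omega)
    have hii : i - 1 = (i - 4) + 3 := by omega
    rw [hii]
    exact real_neg m _ _ hkey
end

section
/- For all integers n and i with n ≥ 4 and 1 ≤ i ≤ n−3: (1/2)^(n−1)·C(n−1, i−1) > (1/2)^(n−4)·C(n−4, i−1) if and only if 2i ≥ n; equivalently, (n−1)(n−2)(n−3) > 8(n−i)(n−i−1)(n−i−2) if and only if 2i ≥ n. Here C(a,b) denotes the binomial coefficient. -/
/-!
Since `C(n-1, i-1) · (n-i)(n-i-1)(n-i-2) = C(n-4, i-1) · (n-1)(n-2)(n-3)`, both comparisons are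
the same statement `8·a(a+1)(a+2) < b(b+1)(b+2)` with `a = n-i-2`, `b = n-3`. As
`x ↦ x(x+1)(x+2)` is monotone and `(2a)(2a+1)(2a+2) ≤ 8·a(a+1)(a+2) < (2a+1)(2a+2)(2a+3)`,
this holds exactly when `2a < b`, i.e. when `n ≤ 2i`.
-/

namespace Nat

theorem choose_add_mul_ascFactorial {n k : ℕ} (hk : k ≤ n) (j : ℕ) :
    (n + j).choose k * (n - k + 1).ascFactorial j = n.choose k * (n + 1).ascFactorial j := by
  induction j with
  | zero => simp
  | succ j ih =>
    have hstep := choose_mul_succ_eq (n + j) k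
    rw [show n + j + 1 - k = n - k + 1 + j by omega] at hstep
    calc (n + (j + 1)).choose k * (n - k + 1).ascFactorial (j + 1)
        = (n + j + 1).choose k * (n - k + 1 + j) * (n - k + 1).ascFactorial j := by
          rw [ascFactorial_succ, ← add_assoc, mul_assoc]
      _ = (n + j + 1) * ((n + j).choose k * (n - k + 1).ascFactorial j) := by
          rw [← hstep]; ring
      _ = n.choose k * (n + 1).ascFactorial (j + 1) := by
          rw [ih, ascFactorial_succ, show n + 1 + j = n + j + 1 by omega]; ring

theorem mul_choose_lt_choose_add_iff {n k : ℕ} (hk : k ≤ n) (c j : ℕ) :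
    c * n.choose k < (n + j).choose k ↔
      c * (n - k + 1).ascFactorial j < (n + 1).ascFactorial j := by
  have hA := ascFactorial_pos (n - k) j
  have hC := choose_pos hk
  rw [← Nat.mul_lt_mul_right hA, choose_add_mul_ascFactorial hk, mul_right_comm,
    mul_comm _ (n.choose k), mul_lt_mul_iff_right₀ hC]

theorem ascFactorial_three (x : ℕ) : x.ascFactorial 3 = x * (x + 1) * (x + 2) := by
  simp only [ascFactorial_succ, ascFactorial_zero]; ring

theorem eight_mul_ascFactorial_three_lt_iff (a b : ℕ) :
    8 * a.ascFactorial 3 < b.ascFactorial 3 ↔ 2 * a < b := by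
  have hlow : (2 * a).ascFactorial 3 ≤ 8 * a.ascFactorial 3 := by
    simp only [ascFactorial_three]; nlinarith
  have hhigh : 8 * a.ascFactorial 3 < (2 * a + 1).ascFactorial 3 := by
    simp only [ascFactorial_three]; nlinarith
  refine ⟨fun h => ?_, fun h => hhigh.trans_le (ascFactorial_le 3 h)⟩
  by_contra! hb
  exact lt_irrefl _ (h.trans_le ((ascFactorial_le 3 hb).trans hlow))

end Nat

theorem binomial_comparison_sign (n i : ℕ) (hn : 4 ≤ n) (hi1 : 1 ≤ i) (hi2 : i ≤ n - 3) :
    ((1 / 2 : ℝ) ^ (n - 1) * ((n - 1).choose (i - 1) : ℝ)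
        > (1 / 2 : ℝ) ^ (n - 4) * ((n - 4).choose (i - 1) : ℝ) ↔ n ≤ 2 * i) ∧
    (((n : ℝ) - 1) * ((n : ℝ) - 2) * ((n : ℝ) - 3)
        > 8 * ((n : ℝ) - i) * ((n : ℝ) - i - 1) * ((n : ℝ) - i - 2) ↔ n ≤ 2 * i) := by
  obtain ⟨k, rfl⟩ : ∃ k, i = k + 1 := ⟨i - 1, by omega⟩
  obtain ⟨m, rfl⟩ : ∃ m, n = m + 4 := ⟨n - 4, by omega⟩
  have hk : k ≤ m := by omega
  have hsign : 8 * (m - k + 1).ascFactorial 3 < (m + 1).ascFactorial 3 ↔ m + 4 ≤ 2 * (k + 1) := by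
    rw [Nat.eight_mul_ascFactorial_three_lt_iff]; omega
  have hbinom : (1 / 2 : ℝ) ^ (m + 4 - 4) * (m + 4 - 4).choose (k + 1 - 1)
      < (1 / 2 : ℝ) ^ (m + 4 - 1) * (m + 4 - 1).choose (k + 1 - 1) ↔
      8 * m.choose k < (m + 3).choose k := by
    simp only [show m + 4 - 1 = m + 3 by omega, Nat.add_sub_cancel, pow_add, mul_assoc]
    rw [mul_lt_mul_iff_right₀ (by positivity), ← Nat.cast_lt (α := ℝ)]
    push_cast
    constructor <;> intro h <;> linarith
  have hpoly : 8 * ((m + 4 : ℕ) - (k + 1 : ℕ) : ℝ) * ((m + 4 : ℕ) - (k + 1 : ℕ) - 1)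
        * ((m + 4 : ℕ) - (k + 1 : ℕ) - 2)
      < ((m + 4 : ℕ) - 1 : ℝ) * ((m + 4 : ℕ) - 2) * ((m + 4 : ℕ) - 3) ↔
      8 * (m - k + 1).ascFactorial 3 < (m + 1).ascFactorial 3 := by
    rw [← Nat.cast_lt (α := ℝ)]
    push_cast [Nat.ascFactorial_three, Nat.cast_sub hk]
    constructor <;> intro h <;> linarith
  exact ⟨hbinom.trans ((Nat.mul_choose_lt_choose_add_iff hk 8 3).trans hsign), hpoly.trans hsign⟩
end

section
/- Let f : ℝ → ℝ be concave and nonincreasing. Let m, n ≥ 1, and for 1 ≤ i ≤ m let c_i > 0 and t_i¹ ≤ t_i² be reals with t_i¹ < t_i² and f(t_i²) < f(t_i¹), and for 1 ≤ j ≤ n let d_j > 0 and s_j¹ < s_j² be reals with f(s_j²) < f(s_j¹). Assume s_j¹ ≤ t_i¹ and s_j² ≤ t_i² for all i, j. Then: (∑_{i=1}^{m} c_i·(f(t_i²) − f(t_i¹))) / (∑_{j=1}^{n} d_j·(f(s_j²) − f(s_j¹))) ≥ (∑_{i=1}^{m} c_i·(t_i² − t_i¹)) / (∑_{j=1}^{n}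 d_j·(s_j² − s_j¹)), and (∑_{j=1}^{n} d_j·(f(s_j¹) − f(s_j²))) / (∑_{i=1}^{m} c_i·(f(t_i¹) − f(t_i²))) ≤ (∑_{j=1}^{n} d_j·(s_j¹ − s_j²)) / (∑_{i=1}^{m} c_i·(t_i¹ − t_i²)). -/
/-!
For a concave function, secant slopes decrease as the interval moves to the right, so every
`t`-interval has smaller slope than every `s`-interval. Cross-multiplying these pairwise slope
comparisons and summing them with the weights `c i * d j` gives
`(∑ c Δf(t)) * (∑ d Δs) ≤ (∑ c Δt) * (∑ d Δf(s))`; both ratio inequalities are rearrangements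
of this one inequality, given the signs of the four sums.
-/

open Finset

theorem Finset.sum_mul_sum_le_sum_mul_sum {ι κ R : Type*} [CommSemiring R] [PartialOrder R]
    [IsOrderedRing R] {I : Finset ι} {J : Finset κ} {c p r : ι → R} {d q w : κ → R}
    (hc : ∀ i ∈ I, 0 ≤ c i) (hd : ∀ j ∈ J, 0 ≤ d j)
    (h : ∀ i ∈ I, ∀ j ∈ J, p i * q j ≤ r i * w j) :
    (∑ i ∈ I, c i * p i) * (∑ j ∈ J, d j * q j) ≤
      (∑ i ∈ I, c i * r i) * (∑ j ∈ J, d j * w j) := by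
  rw [sum_mul_sum, sum_mul_sum]
  refine sum_le_sum fun i hi => sum_le_sum fun j hj => ?_
  calc c i * p i * (d j * q j) = c i * d j * (p i * q j) := by ring
    _ ≤ c i * d j * (r i * w j) :=
      mul_le_mul_of_nonneg_left (h i hi j hj) (mul_nonneg (hc i hi) (hd j hj))
    _ = c i * r i * (d j * w j) := by ring

section

variable {𝕜 : Type*} [Field 𝕜] [LinearOrder 𝕜] [IsStrictOrderedRing 𝕜]
  {s : Set 𝕜} {f : 𝕜 → 𝕜} {x₁ x₂ y₁ y₂ a b A B : 𝕜}

theorem ConcaveOn.slope_le_slope_of_le_of_le (hf : ConcaveOn 𝕜 s f)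
    (hx₁ : x₁ ∈ s) (hx₂ : x₂ ∈ s) (hy₁ : y₁ ∈ s) (hy₂ : y₂ ∈ s)
    (hx : x₁ < x₂) (hy : y₁ < y₂) (h₁ : x₁ ≤ y₁) (h₂ : x₂ ≤ y₂) :
    slope f y₁ y₂ ≤ slope f x₁ x₂ := by
  have hxy : x₁ < y₂ := hx.trans_le h₂
  calc slope f y₁ y₂ = slope f y₂ y₁ := slope_comm f y₁ y₂
    _ ≤ slope f y₂ x₁ :=
      hf.slope_anti hy₂ ⟨hx₁, hxy.ne⟩ ⟨hy₁, hy.ne⟩ h₁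
    _ = slope f x₁ y₂ := slope_comm f y₂ x₁
    _ ≤ slope f x₁ x₂ :=
      hf.slope_anti hx₁ ⟨hx₂, hx.ne'⟩ ⟨hy₂, hxy.ne'⟩ h₂

theorem ConcaveOn.sub_mul_sub_le_sub_mul_sub (hf : ConcaveOn 𝕜 s f)
    (hx₁ : x₁ ∈ s) (hx₂ : x₂ ∈ s) (hy₁ : y₁ ∈ s) (hy₂ : y₂ ∈ s)
    (hx : x₁ < x₂) (hy : y₁ < y₂) (h₁ : x₁ ≤ y₁) (h₂ : x₂ ≤ y₂) :
    (f y₂ - f y₁) * (x₂ - x₁) ≤ (y₂ - y₁) * (f x₂ - f x₁) := by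
  rw [mul_comm (y₂ - y₁), ← div_le_div_iff₀ (sub_pos.2 hy) (sub_pos.2 hx)]
  simpa only [slope_def_field] using
    hf.slope_le_slope_of_le_of_le hx₁ hx₂ hy₁ hy₂ hx hy h₁ h₂

theorem div_le_div_of_mul_le_mul_of_neg (hB : B < 0) (hb : 0 < b) (h : A * b ≤ a * B) :
    a / b ≤ A / B := by
  rw [← neg_div_neg_eq A B, div_le_div_iff₀ hb (neg_pos.2 hB)]
  linarith

theorem neg_div_neg_le_neg_div_neg_of_mul_le_mul (hA : A < 0) (ha : 0 < a)
    (h : A * b ≤ a * B) :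
    -B / -A ≤ -b / -a := by
  rw [neg_div_neg_eq b a, div_le_div_iff₀ (neg_pos.2 hA) ha]
  linarith

end

theorem concave_ratio_inequality_general
    (f : ℝ → ℝ) (hconc : ConcaveOn ℝ Set.univ f)
    (m n : ℕ) (hm : 1 ≤ m) (hn : 1 ≤ n)
    (c t₁ t₂ : ℕ → ℝ) (d s₁ s₂ : ℕ → ℝ)
    (hc : ∀ i ∈ Finset.Icc 1 m, 0 < c i)
    (ht : ∀ i ∈ Finset.Icc 1 m, t₁ i < t₂ i)
    (hft : ∀ i ∈ Finset.Icc 1 m, f (t₂ i) < f (t₁ i))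
    (hd : ∀ j ∈ Finset.Icc 1 n, 0 < d j)
    (hs : ∀ j ∈ Finset.Icc 1 n, s₁ j < s₂ j)
    (hfs : ∀ j ∈ Finset.Icc 1 n, f (s₂ j) < f (s₁ j))
    (hst₁ : ∀ i ∈ Finset.Icc 1 m, ∀ j ∈ Finset.Icc 1 n, s₁ j ≤ t₁ i)
    (hst₂ : ∀ i ∈ Finset.Icc 1 m, ∀ j ∈ Finset.Icc 1 n, s₂ j ≤ t₂ i) :
    (∑ i ∈ Finset.Icc 1 m, c i * (f (t₂ i) - f (t₁ i)))
        / (∑ j ∈ Finset.Icc 1 n, d j * (f (s₂ j) - f (s₁ j)))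
      ≥ (∑ i ∈ Finset.Icc 1 m, c i * (t₂ i - t₁ i))
        / (∑ j ∈ Finset.Icc 1 n, d j * (s₂ j - s₁ j)) ∧
    (∑ j ∈ Finset.Icc 1 n, d j * (f (s₁ j) - f (s₂ j)))
        / (∑ i ∈ Finset.Icc 1 m, c i * (f (t₁ i) - f (t₂ i)))
      ≤ (∑ j ∈ Finset.Icc 1 n, d j * (s₁ j - s₂ j))
        / (∑ i ∈ Finset.Icc 1 m, c i * (t₁ i - t₂ i)) := by
  have hI : (Icc 1 m).Nonempty := ⟨1, mem_Icc.2 ⟨le_rfl, hm⟩⟩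
  have hJ : (Icc 1 n).Nonempty := ⟨1, mem_Icc.2 ⟨le_rfl, hn⟩⟩
  have hA := sum_neg (fun i hi => mul_neg_of_pos_of_neg (hc i hi) (sub_neg.2 (hft i hi))) hI
  have hB := sum_neg (fun j hj => mul_neg_of_pos_of_neg (hd j hj) (sub_neg.2 (hfs j hj))) hJ
  have ha := sum_pos (fun i hi => mul_pos (hc i hi) (sub_pos.2 (ht i hi))) hI
  have hb := sum_pos (fun j hj => mul_pos (hd j hj) (sub_pos.2 (hs j hj))) hJ
  have hkey := sum_mul_sum_le_sum_mul_sum (fun i hi => (hc i hi).le) (fun j hj => (hd j hj).le)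
    fun i hi j hj => hconc.sub_mul_sub_le_sub_mul_sub trivial trivial trivial trivial
      (hs j hj) (ht i hi) (hst₁ i hi j hj) (hst₂ i hi j hj)
  refine ⟨div_le_div_of_mul_le_mul_of_neg hB hb hkey, ?_⟩
  simpa only [← sum_neg_distrib, ← mul_neg, neg_sub] using
    neg_div_neg_le_neg_div_neg_of_mul_le_mul hA ha hkey

theorem concave_ratio_inequality
    (f : ℝ → ℝ) (hconc : ConcaveOn ℝ Set.univ f) (hanti : Antitone f)
    (m n : ℕ) (hm : 1 ≤ m) (hn : 1 ≤ n)
    (c t₁ t₂ : ℕ → ℝ) (d s₁ s₂ : ℕ → ℝ)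
    (hc : ∀ i ∈ Finset.Icc 1 m, 0 < c i)
    (ht : ∀ i ∈ Finset.Icc 1 m, t₁ i < t₂ i)
    (hft : ∀ i ∈ Finset.Icc 1 m, f (t₂ i) < f (t₁ i))
    (hd : ∀ j ∈ Finset.Icc 1 n, 0 < d j)
    (hs : ∀ j ∈ Finset.Icc 1 n, s₁ j < s₂ j)
    (hfs : ∀ j ∈ Finset.Icc 1 n, f (s₂ j) < f (s₁ j))
    (hst₁ : ∀ i ∈ Finset.Icc 1 m, ∀ j ∈ Finset.Icc 1 n, s₁ j ≤ t₁ i)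
    (hst₂ : ∀ i ∈ Finset.Icc 1 m, ∀ j ∈ Finset.Icc 1 n, s₂ j ≤ t₂ i) :
    (∑ i ∈ Finset.Icc 1 m, c i * (f (t₂ i) - f (t₁ i)))
        / (∑ j ∈ Finset.Icc 1 n, d j * (f (s₂ j) - f (s₁ j)))
      ≥ (∑ i ∈ Finset.Icc 1 m, c i * (t₂ i - t₁ i))
        / (∑ j ∈ Finset.Icc 1 n, d j * (s₂ j - s₁ j)) ∧
    (∑ j ∈ Finset.Icc 1 n, d j * (f (s₁ j) - f (s₂ j)))
        / (∑ i ∈ Finset.Icc 1 m, c i * (f (t₁ i) - f (t₂ i)))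
      ≤ (∑ j ∈ Finset.Icc 1 n, d j * (s₁ j - s₂ j))
        / (∑ i ∈ Finset.Icc 1 m, c i * (t₁ i - t₂ i)) :=
  concave_ratio_inequality_general f hconc m n hm hn c t₁ t₂ d s₁ s₂ hc ht hft hd hs hfs hst₁ hst₂
end

section
/- There exists a constant C > 0 such that for every integer n ≥ 4: n³/(3(n−1)²) + (n³/3) · ∑_{k=1}^{⌊n/2⌋−1} (n−k) / ((k+1)·(n−k−1)²·(n−2k)) ≤ n·ln n + C·n. -/
/-!
Write `a = k + 1`, `b = n - k - 1`, `c = n - 2k`, so that `a + b = n`, `a + c = b + 2` and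
`b ≥ n / 2`. The summand `(b + 1) / (a b² c)` is then at most `b⁻² (a⁻¹ + c⁻¹)`. The `c`-part is at
most `4 n⁻² c⁻¹`, and `∑ 1 / (n - 2k) ≤ (log n) / 2`; by partial fractions
`a⁻¹ b⁻² = n⁻² (a⁻¹ + b⁻¹) + n⁻¹ b⁻²`, whose main part sums to `n⁻² ∑ 1 / (k + 1) ≤ n⁻² log n`.
Both sums are compared with telescoping logarithms. After multiplying by `n³ / 3` this gives
`n log n + n`, and the first term `1 / q₁` is at most `n`.
-/

open Finset Real

-- The first term of the series `log ((x + 1) / (x - 1)) = ∑ 2 x^(-(2j + 1)) / (2j + 1)`.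
lemma two_div_le_log_add_one_sub_log_sub_one {x : ℝ} (hx : 1 < x) :
    2 / x ≤ log (x + 1) - log (x - 1) := by
  have hx1 : x - 1 ≠ 0 := by linarith
  have h := le_hasSum (hasSum_log_one_add_inv (a := (x - 1) / 2) (by linarith)) 0
    fun k _ ↦ by positivity
  rw [show 2 * ((x - 1) / 2) + 1 = x by ring,
    show 1 + ((x - 1) / 2)⁻¹ = (x + 1) / (x - 1) by field_simp; ring,
    log_div (by linarith) hx1] at h
  simpa [div_eq_mul_inv] using h

lemma inv_add_one_le_log_add_one_sub_log {x : ℝ} (hx : 0 < x) :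
    (x + 1)⁻¹ ≤ log (x + 1) - log x := by
  have h := one_sub_inv_le_log_of_pos (show 0 < (x + 1) / x by positivity)
  rw [log_div (by positivity) hx.ne', inv_div] at h
  calc (x + 1)⁻¹ = 1 - x / (x + 1) := by field_simp; ring
    _ ≤ _ := h

lemma sum_Icc_le_sub_of_le_sub {f g : ℕ → ℝ} {a b : ℕ} (hab : a ≤ b + 1)
    (h : ∀ k ∈ Icc a b, f k ≤ g (k + 1) - g k) : ∑ k ∈ Icc a b, f k ≤ g (b + 1) - g a :=
  calc ∑ k ∈ Icc a b, f k ≤ ∑ k ∈ Icc a b, (g (k + 1) - g k) := sum_le_sum h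
    _ = g (b + 1) - g a := by rw [← Ico_add_one_right_eq_Icc, sum_Ico_sub g hab]

lemma sum_Icc_inv_add_one_le_log (m : ℕ) :
    ∑ k ∈ Icc 1 m, ((k : ℝ) + 1)⁻¹ ≤ log (m + 1) := by
  have h := sum_Icc_le_sub_of_le_sub (g := fun k : ℕ ↦ log k) (a := 1) (b := m) (by omega)
    fun k hk ↦ by
      simpa using inv_add_one_le_log_add_one_sub_log (x := k) (by
        exact_mod_cast (mem_Icc.1 hk).1)
  simpa using h

lemma sum_Icc_inv_sub_two_mul_le_log {n : ℝ} {m : ℕ} (hm : 2 * m + 2 ≤ n) :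
    ∑ k ∈ Icc 1 m, (n - 2 * k)⁻¹ ≤ log (n - 1) / 2 := by
  have h := sum_Icc_le_sub_of_le_sub (f := fun k : ℕ ↦ (n - 2 * k)⁻¹)
    (g := fun k : ℕ ↦ -log (n - 2 * k + 1) / 2) (a := 1) (b := m) (by omega) fun k hk ↦ by
      have hk : (k : ℝ) ≤ m := by exact_mod_cast (mem_Icc.1 hk).2
      have h := two_div_le_log_add_one_sub_log_sub_one (x := n - 2 * k) (by linarith)
      rw [← inv_mul_eq_div, show n - 2 * k - 1 = n - 2 * (k + 1 : ℕ) + 1 by push_cast; ring] at h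
      linarith
  have hlast : 0 ≤ log (n - 2 * (m + 1 : ℕ) + 1) := log_nonneg (by push_cast; linarith)
  rw [show n - 2 * ((1 : ℕ) : ℝ) + 1 = n - 1 by push_cast; ring] at h
  linarith

/-- `n ^ 3 / 3 * hittingTerm n k = q_k / (q_{k+1} (q_k - p_k))` for `q_k = f (k / n)`,
`p_k = f ((n - k) / n)` and `f p = 3 p (1 - p)²`. -/
noncomputable def hittingTerm (n k : ℝ) : ℝ := (n - k) / ((k + 1) * (n - k - 1) ^ 2 * (n - 2 * k))

lemma div_le_inv_sq_mul_inv_add_inv {a b c : ℝ} (ha : 0 < a) (hb : 0 < b) (hc : 0 < c)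
    (h : b + 1 ≤ a + c) : (b + 1) / (a * b ^ 2 * c) ≤ (b ^ 2)⁻¹ * (a⁻¹ + c⁻¹) := by
  rw [show (b ^ 2)⁻¹ * (a⁻¹ + c⁻¹) = (a + c) / (a * b ^ 2 * c) by field_simp; ring]
  gcongr

lemma hittingTerm_le {n k : ℝ} (hk : 0 ≤ k) (hkn : 2 * k + 2 ≤ n) :
    hittingTerm n k ≤ (n ^ 2)⁻¹ * (4 * (n - 2 * k)⁻¹ + (k + 1)⁻¹) + 6 / n ^ 3 := by
  have hn : 0 < n := by linarith
  have hb : 0 < n - k - 1 := by linarith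
  have hbn : n ≤ 2 * (n - k - 1) := by linarith
  have hsplit : hittingTerm n k ≤ ((n - k - 1) ^ 2)⁻¹ * ((k + 1)⁻¹ + (n - 2 * k)⁻¹) := by
    simpa [hittingTerm, sub_add_cancel] using
      div_le_inv_sq_mul_inv_add_inv (a := k + 1) (b := n - k - 1) (c := n - 2 * k)
        (by linarith) hb (by linarith) (by linarith)
  have hpf : ((n - k - 1) ^ 2)⁻¹ * (k + 1)⁻¹
      = (n ^ 2)⁻¹ * ((k + 1)⁻¹ + (n - k - 1)⁻¹) + (n * (n - k - 1) ^ 2)⁻¹ := by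
    field_simp
    ring
  have hinv : (n - k - 1)⁻¹ ≤ 2 / n := by
    rw [inv_le_comm₀ hb (by positivity), inv_div]; linarith
  have hinv_sq : ((n - k - 1) ^ 2)⁻¹ ≤ 4 / n ^ 2 := by
    rw [inv_le_comm₀ (by positivity) (by positivity), inv_div]; nlinarith
  calc hittingTerm n k
      ≤ ((n - k - 1) ^ 2)⁻¹ * (k + 1)⁻¹ + ((n - k - 1) ^ 2)⁻¹ * (n - 2 * k)⁻¹ := by
        rwa [← mul_add]
    _ = (n ^ 2)⁻¹ * ((k + 1)⁻¹ + (n - k - 1)⁻¹) + n⁻¹ * ((n - k - 1) ^ 2)⁻¹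
        + ((n - k - 1) ^ 2)⁻¹ * (n - 2 * k)⁻¹ := by rw [hpf, mul_inv]
    _ ≤ (n ^ 2)⁻¹ * ((k + 1)⁻¹ + 2 / n) + n⁻¹ * (4 / n ^ 2) + 4 / n ^ 2 * (n - 2 * k)⁻¹ := by
        have : 0 ≤ (n - 2 * k)⁻¹ := inv_nonneg.2 (by linarith)
        gcongr
    _ = (n ^ 2)⁻¹ * (4 * (n - 2 * k)⁻¹ + (k + 1)⁻¹) + 6 / n ^ 3 := by
        field_simp
        ring

lemma sum_hittingTerm_le {n : ℝ} {m : ℕ} (hm : 2 * m + 2 ≤ n) :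
    ∑ k ∈ Icc 1 m, hittingTerm n k
      ≤ (n ^ 2)⁻¹ * (2 * log (n - 1) + log (m + 1)) + m * (6 / n ^ 3) :=
  calc ∑ k ∈ Icc 1 m, hittingTerm n k
      ≤ ∑ k ∈ Icc 1 m, ((n ^ 2)⁻¹ * (4 * (n - 2 * k)⁻¹ + ((k : ℝ) + 1)⁻¹) + 6 / n ^ 3) :=
        sum_le_sum fun k hk ↦ hittingTerm_le k.cast_nonneg (by
          have : (k : ℝ) ≤ m := by exact_mod_cast (mem_Icc.1 hk).2
          linarith)
    _ = (n ^ 2)⁻¹ * (4 * ∑ k ∈ Icc 1 m, (n - 2 * k)⁻¹ + ∑ k ∈ Icc 1 m, ((k : ℝ) + 1)⁻¹)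
          + m * (6 / n ^ 3) := by
        rw [sum_add_distrib, ← mul_sum, sum_add_distrib, ← mul_sum, sum_const, Nat.card_Icc,
          nsmul_eq_mul, add_tsub_cancel_right]
    _ ≤ (n ^ 2)⁻¹ * (2 * log (n - 1) + log (m + 1)) + m * (6 / n ^ 3) := by
        have hSc := sum_Icc_inv_sub_two_mul_le_log hm
        have hSa := sum_Icc_inv_add_one_le_log m
        gcongr (n ^ 2)⁻¹ * ?_ + _
        linarith

lemma cube_div_three_mul_sum_hittingTerm_le {n : ℕ} (hn : 2 ≤ n) :
    (n : ℝ) ^ 3 / 3 * ∑ k ∈ Icc 1 (n / 2 - 1), hittingTerm n k ≤ n * log n + n := by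
  have hn' : (2 : ℝ) ≤ n := by exact_mod_cast hn
  have hm : 2 * ((n / 2 - 1 : ℕ) : ℝ) + 2 ≤ n := by
    exact_mod_cast (show 2 * (n / 2 - 1) + 2 ≤ n by omega)
  have hlog₁ : log (n - 1) ≤ log n := log_le_log (by linarith) (by linarith)
  have hlog₂ : log ((n / 2 - 1 : ℕ) + 1) ≤ log n := log_le_log (by positivity) (by linarith)
  calc (n : ℝ) ^ 3 / 3 * ∑ k ∈ Icc 1 (n / 2 - 1), hittingTerm n k
      ≤ (n : ℝ) ^ 3 / 3 * (((n : ℝ) ^ 2)⁻¹ * (2 * log n + log n) + n / 2 * (6 / n ^ 3)) := by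
        gcongr
        refine (sum_hittingTerm_le hm).trans ?_
        gcongr
        linarith
    _ = n * log n + n := by
        field_simp
        ring

lemma cube_div_three_mul_sub_one_sq_le_self {n : ℝ} (hn : 3 ≤ n) :
    n ^ 3 / (3 * (n - 1) ^ 2) ≤ n := by
  rw [div_le_iff₀ (by nlinarith)]
  nlinarith

theorem hitting_time_bound_explicit :
    ∃ C : ℝ, C > 0 ∧
      ∀ n : ℕ, 4 ≤ n →
        (n : ℝ) ^ 3 / (3 * ((n : ℝ) - 1) ^ 2)
          + ((n : ℝ) ^ 3 / 3) *
            ∑ k ∈ Finset.Icc 1 (n / 2 - 1),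
              ((n : ℝ) - k) / (((k : ℝ) + 1) * ((n : ℝ) - k - 1) ^ 2 * ((n : ℝ) - 2 * k))
        ≤ n * Real.log n + C * n := by
  refine ⟨2, two_pos, fun n hn ↦ ?_⟩
  have hfirst := cube_div_three_mul_sub_one_sq_le_self (n := n)
    (by exact_mod_cast (by omega : 3 ≤ n))
  have hsum := cube_div_three_mul_sum_hittingTerm_le (n := n) (by omega)
  unfold hittingTerm at hsum
  linarith
end
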